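/- arXiv:math/0701925 — 9 statements merged into one kernel-verified Lean document; each statement's English description precedes it below -/
import Mathlib

section
/- Let G be a compact topological group with normalized Haar measure μ and A ⊆ G measurable with 0 < μ(A) ≤ 1. If k = ⌈1/μ(A)⌉, then there exists a subset X ⊆ G with |X| = k such that μ(AX) > 1 - 1/e. -/
/-!
Greedy covering. For measurable `A` and `C`, some right translate `A x` meets `C` in measure at
least `μ(A) μ(C) - ε`: the mean over `x` of `μ(A x ∩ C)` is `μ(A) μ(C)`. Without second
countability Fubini is not available for indicator functions, so the mean is computed for
continuous Urysohn approximations of `A` and `C`, where the compact-support Fubini theorem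
applies, at the cost of `ε`. Adding such translates one at a time, `k` of them leave an uncovered
set of measure at most `(1 - μ(A))^k + ε < 1/e`. The set of translates can be padded to exactly
`k` elements, since a finite `G` is covered by `|G|` translates of `A`, so `k ≤ |G|`.
-/

open MeasureTheory Pointwise Set

theorem Real.one_sub_pow_lt_exp_neg_one {t : ℝ} (ht0 : 0 < t) (ht1 : t ≤ 1) {k : ℕ}
    (hk : 1 / t ≤ k) : (1 - t) ^ k < Real.exp (-1) := by
  have hk' : 1 ≤ t * k := by rwa [div_le_iff₀ ht0, mul_comm] at hk
  have hk0 : k ≠ 0 := by rintro rfl; simp at hk'; linarith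
  calc (1 - t) ^ k < Real.exp (-t) ^ k :=
        pow_lt_pow_left₀ (by linarith [Real.add_one_lt_exp (neg_ne_zero.2 ht0.ne')])
          (by linarith) hk0
    _ = Real.exp (-(t * k)) := by rw [← Real.exp_nat_mul]; ring_nf
    _ ≤ Real.exp (-1) := Real.exp_le_exp.2 (by linarith)

section MeasurableGroup

variable {G : Type*} [Group G] [MeasurableSpace G] [MeasurableMul G]

theorem MeasurableSet.mul_finset {A : Set G} (hA : MeasurableSet A) (X : Finset G) :
    MeasurableSet (A * (X : Set G)) := by
  rw [← iUnion_mul_right_image]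
  exact X.measurableSet_biUnion fun x _ => by
    rw [image_mul_right]
    exact measurable_mul_const _ hA

variable {μ : Measure G} [μ.IsMulRightInvariant]

theorem measureReal_mul_singleton (A : Set G) (x : G) : μ.real (A * {x}) = μ.real A := by
  rw [mul_singleton, image_mul_right]
  simp only [Measure.real, measure_preimage_mul_right]

variable [IsProbabilityMeasure μ]

theorem one_le_natCard_mul_measureReal [Finite G] {A : Set G} (hA : A.Nonempty) :
    1 ≤ Nat.card G * μ.real A := by
  have := Fintype.ofFinite G
  obtain ⟨a, ha⟩ := hA
  have hcover : ⋃ x : G, A * {x} = univ :=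
    eq_univ_of_forall fun g => mem_iUnion.2 ⟨a⁻¹ * g, mem_mul.2 ⟨a, ha, _, rfl, by group⟩⟩
  calc (1 : ℝ) = μ.real (⋃ x : G, A * {x}) := by rw [hcover, probReal_univ]
    _ ≤ ∑ x : G, μ.real (A * {x}) := measureReal_iUnion_fintype_le _
    _ = Nat.card G * μ.real A := by
      simp only [measureReal_mul_singleton, Finset.sum_const, Finset.card_univ, nsmul_eq_mul,
        Nat.card_eq_fintype_card]

theorem exists_superset_card_eq_ceil_inv_measureReal {A : Set G} (hA : 0 < μ.real A)
    {X : Finset G} (hX : X.card ≤ ⌈1 / μ.real A⌉₊) :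
    ∃ Y : Finset G, X ⊆ Y ∧ Y.card = ⌈1 / μ.real A⌉₊ := by
  cases finite_or_infinite G with
  | inr _ => exact Infinite.exists_superset_card_eq X _ hX
  | inl _ =>
    have := Fintype.ofFinite G
    refine Finset.exists_superset_card_eq hX (Nat.ceil_le.2 ?_)
    rw [div_le_iff₀ hA, ← Nat.card_eq_fintype_card]
    exact one_le_natCard_mul_measureReal (nonempty_of_measureReal_ne_zero hA.ne')

end MeasurableGroup

section Approximation

variable {X : Type*} [TopologicalSpace X] [RegularSpace X] [LocallyCompactSpace X]
  [MeasurableSpace X] [BorelSpace X] {μ : Measure X} [IsFiniteMeasure μ]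
  [μ.InnerRegularCompactLTTop] [μ.OuterRegular]

theorem MeasurableSet.exists_continuous_approx_indicator {A : Set X} (hA : MeasurableSet A) {ε : ℝ}
    (hε : 0 < ε) :
    ∃ (f : C(X, ℝ)) (U : Set X), MeasurableSet U ∧ μ.real (U \ A) < ε ∧ 0 ≤ ⇑f ∧
      ⇑f ≤ U.indicator 1 ∧ μ.real A - ε ≤ ∫ x, f x ∂μ := by
  have hε' : ENNReal.ofReal ε ≠ 0 := by simpa using hε
  obtain ⟨K, hKA, hKc, hKcl, hAK⟩ :=
    hA.exists_isCompact_isClosed_sdiff_lt (measure_ne_top μ A) hε'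
  obtain ⟨U, hKU, hUo, hUK⟩ := K.exists_isOpen_lt_add (measure_ne_top μ K) hε'
  obtain ⟨f, hfK, hfU, hfc, hf01⟩ := exists_continuous_one_zero_of_isCompact hKc
    hUo.isClosed_compl (disjoint_compl_right_iff_subset.mpr hKU)
  refine ⟨f, U, hUo.measurableSet, ?_, fun x => (hf01 x).1, fun x => ?_, ?_⟩
  · have hUK' : μ (U \ K) < ENNReal.ofReal ε :=
      measure_sdiff_lt_of_lt_add hKcl.nullMeasurableSet hKU (by finiteness) hUK
    calc μ.real (U \ A) ≤ μ.real (U \ K) := measureReal_mono (sdiff_subset_sdiff_right hKA)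
      _ < ε := ENNReal.toReal_lt_of_lt_ofReal hUK'
  · by_cases hx : x ∈ U
    · simpa [hx] using (hf01 x).2
    · simp [hx, hfU hx]
  · have hAK' : μ.real (A \ K) < ε := ENNReal.toReal_lt_of_lt_ofReal hAK
    rw [measureReal_sdiff hKA hKcl.measurableSet] at hAK'
    calc μ.real A - ε ≤ μ.real K := by linarith
      _ = ∫ x, K.indicator 1 x ∂μ := (integral_indicator_one hKcl.measurableSet).symm
      _ ≤ ∫ x, f x ∂μ := by
        refine integral_mono_of_nonneg
          (.of_forall <| indicator_nonneg fun _ _ => zero_le_one)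
          (f.continuous.integrable_of_hasCompactSupport hfc) (.of_forall fun x => ?_)
        by_cases hx : x ∈ K
        · simp [hx, hfK hx]
        · simpa [hx] using (hf01 x).1

end Approximation

section CompactGroup

variable {G : Type*} [Group G] [TopologicalSpace G] [IsTopologicalGroup G] [CompactSpace G]
  [MeasurableSpace G] [BorelSpace G]

theorem exists_integral_mul_le_integral_mul_comp_mul_right {μ : Measure G}
    [μ.IsMulLeftInvariant] [IsProbabilityMeasure μ] (f g : C(G, ℝ)) :
    ∃ x, (∫ z, f z ∂μ) * (∫ z, g z ∂μ) ≤ ∫ z, f z * g (z * x) ∂μ := by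
  set c : G → ℝ := fun x => ∫ z, f z * g (z * x) ∂μ
  have hF : Continuous (Function.uncurry fun x z : G => f z * g (z * x)) := by
    change Continuous fun p : G × G => f p.2 * g (p.2 * p.1)
    fun_prop
  have hc : Continuous c := by
    rw [← continuousOn_univ]
    exact continuousOn_integral_of_compact_support isCompact_univ hF.continuousOn
      fun _ _ _ h => absurd (mem_univ _) h
  have hmean : ∫ x, c x ∂μ = (∫ z, f z ∂μ) * (∫ z, g z ∂μ) := by
    simp only [c]
    rw [integral_integral_swap_of_hasCompactSupport hF (isClosed_tsupport _).isCompact,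
      ← integral_mul_const]
    simp_rw [integral_const_mul, integral_mul_left_eq_self (fun y => g y)]
  obtain ⟨x, -, hx⟩ := isCompact_univ.exists_isMaxOn univ_nonempty hc.continuousOn
  refine ⟨x, hmean ▸ ?_⟩
  simpa using integral_mono (hc.integrable_of_hasCompactSupport (isClosed_tsupport _).isCompact)
    (integrable_const (μ := μ) (c x)) fun y => hx (mem_univ y)

instance IsHaarMeasure.isMulRightInvariant_of_isProbabilityMeasure (μ : Measure G)
    [μ.IsHaarMeasure] [IsProbabilityMeasure μ] : μ.IsMulRightInvariant where
  map_mul_right_eq_self g :=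
    have : IsProbabilityMeasure (μ.map (· * g)) :=
      Measure.isProbabilityMeasure_map (measurable_mul_const g).aemeasurable
    Measure.isHaarMeasure_eq_of_isProbabilityMeasure _ μ

variable {μ : Measure G} [μ.IsHaarMeasure] [IsProbabilityMeasure μ]

theorem exists_le_measureReal_mul_singleton_inter {A C : Set G} (hA : MeasurableSet A)
    (hC : MeasurableSet C) {ε : ℝ} (hε : 0 < ε) :
    ∃ x, μ.real A * μ.real C - ε ≤ μ.real (A * {x} ∩ C) := by
  obtain ⟨f, U, hU, hUA, hf0, hfU, hfA⟩ :=
    hA.exists_continuous_approx_indicator (μ := μ) (ε := ε / 4) (by positivity)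
  obtain ⟨g, W, hW, hWC, hg0, hgW, hgC⟩ :=
    hC.exists_continuous_approx_indicator (μ := μ) (ε := ε / 4) (by positivity)
  obtain ⟨x, hx⟩ := exists_integral_mul_le_integral_mul_comp_mul_right (μ := μ) f g
  refine ⟨x, ?_⟩
  have hWx : MeasurableSet ((· * x) ⁻¹' W) := measurable_mul_const x hW
  have hpoint : ∀ z, f z * g (z * x) ≤ (U ∩ (· * x) ⁻¹' W).indicator 1 z := fun z => by
    rw [inter_indicator_one]
    exact mul_le_mul (hfU z) (hgW _) (hg0 _) (indicator_nonneg (fun _ _ => zero_le_one) _)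
  have hcover : U ∩ (· * x) ⁻¹' W ⊆ (A ∩ (· * x) ⁻¹' C ∪ U \ A) ∪ (· * x) ⁻¹' (W \ C) := by
    rintro z ⟨hzU, hzW⟩
    by_cases hzA : z ∈ A <;> by_cases hzC : z * x ∈ C <;> simp_all
  have htranslate : μ.real (A ∩ (· * x) ⁻¹' C) = μ.real (A * {x} ∩ C) := by
    simp only [Measure.real]
    rw [← measure_preimage_mul_right μ x (A * {x} ∩ C)]
    congr 2
    ext z
    simp [mul_singleton]
  have hupper : ∫ z, f z * g (z * x) ∂μ ≤ μ.real (A * {x} ∩ C) + ε / 2 := calc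
    ∫ z, f z * g (z * x) ∂μ ≤ ∫ z, (U ∩ (· * x) ⁻¹' W).indicator 1 z ∂μ :=
      integral_mono_of_nonneg (.of_forall fun z => mul_nonneg (hf0 z) (hg0 _))
        ((integrable_const 1).indicator (hU.inter hWx)) (.of_forall hpoint)
    _ = μ.real (U ∩ (· * x) ⁻¹' W) := integral_indicator_one (hU.inter hWx)
    _ ≤ μ.real (A ∩ (· * x) ⁻¹' C) + μ.real (U \ A) + μ.real ((· * x) ⁻¹' (W \ C)) :=
      (measureReal_mono hcover).trans <|
        (measureReal_union_le _ _).trans (by gcongr; exact measureReal_union_le _ _)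
    _ ≤ μ.real (A * {x} ∩ C) + ε / 2 := by
      have : μ.real ((· * x) ⁻¹' (W \ C)) = μ.real (W \ C) := by
        simp only [Measure.real, measure_preimage_mul_right]
      linarith
  have hg1 : ∫ z, g z ∂μ ≤ 1 := calc
    ∫ z, g z ∂μ ≤ ∫ z, W.indicator 1 z ∂μ :=
      integral_mono_of_nonneg (.of_forall hg0) ((integrable_const 1).indicator hW)
        (.of_forall hgW)
    _ = μ.real W := integral_indicator_one hW
    _ ≤ 1 := measureReal_le_one
  have hg0' : 0 ≤ ∫ z, g z ∂μ := integral_nonneg hg0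
  have hA1 : μ.real A ≤ 1 := measureReal_le_one
  -- `a b - p q = a (b - q) + q (a - p)` with `a, q ∈ [0, 1]`
  have hlower : μ.real A * μ.real C - ε / 2 ≤ (∫ z, f z ∂μ) * (∫ z, g z ∂μ) := by
    nlinarith [measureReal_nonneg (μ := μ) (s := A)]
  linarith

theorem exists_measureReal_compl_union_mul_singleton_le {A B : Set G} (hA : MeasurableSet A)
    (hB : MeasurableSet B) {ε : ℝ} (hε : 0 < ε) :
    ∃ x, μ.real (B ∪ A * {x})ᶜ ≤ (1 - μ.real A) * μ.real Bᶜ + ε := by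
  obtain ⟨x, hx⟩ := exists_le_measureReal_mul_singleton_inter (μ := μ) hA hB.compl hε
  refine ⟨x, ?_⟩
  have hAx : MeasurableSet (A * {x}) := by simpa using hA.mul_finset {x}
  have hsplit := measureReal_sdiff_add_inter (μ := μ) (s := Bᶜ) hAx
  rw [compl_union, ← sdiff_eq]
  rw [inter_comm] at hx
  linarith

theorem exists_card_le_measureReal_compl_mul_finset_le {A : Set G} (hA : MeasurableSet A)
    (n : ℕ) {ε : ℝ} (hε : 0 < ε) :
    ∃ X : Finset G, X.card ≤ n ∧ μ.real (A * (X : Set G))ᶜ ≤ (1 - μ.real A) ^ n + ε := by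
  classical
  induction n generalizing ε with
  | zero => exact ⟨∅, by simp, by simp [hε.le]⟩
  | succ n ih =>
    obtain ⟨X, hXn, hX⟩ := ih (half_pos hε)
    obtain ⟨x, hx⟩ :=
      exists_measureReal_compl_union_mul_singleton_le (μ := μ) hA (hA.mul_finset X) (half_pos hε)
    refine ⟨insert x X, (Finset.card_insert_le _ _).trans (by omega), ?_⟩
    have hA1 : 0 ≤ 1 - μ.real A := sub_nonneg.2 measureReal_le_one
    rw [Finset.coe_insert, insert_eq, mul_union, union_comm]
    calc _ ≤ (1 - μ.real A) * μ.real (A * (X : Set G))ᶜ + ε / 2 := hx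
      _ ≤ (1 - μ.real A) * ((1 - μ.real A) ^ n + ε / 2) + ε / 2 := by gcongr
      _ ≤ (1 - μ.real A) ^ (n + 1) + ε := by
        rw [pow_succ]
        nlinarith [mul_nonneg (measureReal_nonneg (μ := μ) (s := A)) hε.le]

end CompactGroup

theorem covering_lemma_e_general {G : Type*} [Group G] [TopologicalSpace G] [IsTopologicalGroup G]
    [CompactSpace G] [MeasurableSpace G] [BorelSpace G]
    (μ : Measure G) [μ.IsHaarMeasure] [IsProbabilityMeasure μ]
    (A : Set G) (hA : MeasurableSet A) (hpos : 0 < μ A)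
    (k : ℕ) (hk : k = ⌈1 / (μ A).toReal⌉₊) :
    ∃ X : Finset G, X.card = k ∧
      1 - 1 / Real.exp 1 < (μ (A * (X : Set G))).toReal := by
  simp only [← measureReal_def] at hk ⊢
  have ht : 0 < μ.real A := ENNReal.toReal_pos hpos.ne' (measure_ne_top μ A)
  have hdecay := Real.one_sub_pow_lt_exp_neg_one ht measureReal_le_one (hk ▸ Nat.le_ceil _)
  obtain ⟨X, hXk, hX⟩ :=
    exists_card_le_measureReal_compl_mul_finset_le (μ := μ) hA k (half_pos (sub_pos.2 hdecay))
  obtain ⟨Y, hXY, hYk⟩ := exists_superset_card_eq_ceil_inv_measureReal ht (hk ▸ hXk)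
  refine ⟨Y, hYk.trans hk.symm, ?_⟩
  have hmono : μ.real (A * (X : Set G)) ≤ μ.real (A * (Y : Set G)) :=
    measureReal_mono (mul_subset_mul_left (Finset.coe_subset.2 hXY))
  rw [probReal_compl_eq_one_sub (hA.mul_finset X)] at hX
  rw [one_div, ← Real.exp_neg]
  linarith

/-- For a compact group `G` with normalized Haar measure `μ` and measurable `A` with
`0 < μ A ≤ 1`, taking `k = ⌈1/μ(A)⌉` there is a `k`-element set `X` with
`μ(AX) > 1 - 1/e`. -/
theorem covering_lemma_e {G : Type*} [Group G] [TopologicalSpace G] [IsTopologicalGroup G]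
    [CompactSpace G] [MeasurableSpace G] [BorelSpace G]
    (μ : Measure G) [μ.IsHaarMeasure] [IsProbabilityMeasure μ]
    (A : Set G) (hA : MeasurableSet A) (hpos : 0 < μ A) (hle : μ A ≤ 1)
    (k : ℕ) (hk : k = ⌈1 / (μ A).toReal⌉₊) :
    ∃ X : Finset G, X.card = k ∧
      1 - 1 / Real.exp 1 < (μ (A * (X : Set G))).toReal :=
  covering_lemma_e_general μ A hA hpos k hk
end

section
/- Let Γ be a finitely generated group, d = d(Γ), and suppose Γ has a sequence of finite normal subgroups Aᵢ with |Aᵢ| → ∞. Then for any chain (Γⱼ) of finite index subgroups of Γ with trivial intersection, RG(Γ,(Γⱼ)) = 0. -/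
/-!
If a finite normal subgroup `A` meets a finite index subgroup `H` trivially, then by the second
isomorphism theorem `H ≅ HA ⧸ A` is a quotient of `HA`, so Schreier's bound gives
`d(H) ≤ [Γ : HA] d(Γ)`, while `|A| ≤ [HA : H]`; hence `d(H) / [Γ : H] ≤ d(Γ) / |A|`.
Along a chain with trivial intersection each fixed finite `Aᵢ` eventually meets `Γⱼ` trivially,
so the rank gradient is at most `d(Γ) / |Aᵢ|` for every `i`, and `|Aᵢ| → ∞`.
-/

open Filter

/-- `d G` is the minimal number of generators of the group `G`. -/
noncomputable def d (G : Type*) [Group G] : ℕ :=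
  sInf {n | ∃ S : Finset G, S.card = n ∧ Subgroup.closure (S : Set G) = ⊤}

theorem d_eq_rank (G : Type*) [Group G] [Group.FG G] : d G = Group.rank G := by
  obtain ⟨S, hS, hS_gen⟩ := Group.rank_spec G
  refine le_antisymm (Nat.sInf_le ⟨S, hS, hS_gen⟩) ?_
  obtain ⟨T, hT, hT_gen⟩ := Nat.sInf_mem (s := {n | ∃ S : Finset G, S.card = n ∧
    Subgroup.closure (S : Set G) = ⊤}) ⟨_, S, rfl, hS_gen⟩
  exact (Group.rank_le hT_gen).trans_eq hT

namespace Subgroup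

variable {G : Type*} [Group G]

theorem card_le_relIndex_of_inf_eq_bot {A H K : Subgroup G} (hAH : A ⊓ H = ⊥) (hAK : A ≤ K)
    (hHK : H.relIndex K ≠ 0) : Nat.card A ≤ H.relIndex K := by
  calc Nat.card A = H.relIndex A := by
        rw [← inf_relIndex_right, inf_comm, hAH, relIndex_bot_left]
    _ ≤ H.relIndex K := relIndex_le_of_le_right hAK hHK

theorem rank_le_rank_sup_of_inf_eq_bot {A H : Subgroup G} [A.Normal] [Group.FG H]
    [Group.FG ↥(H ⊔ A)] (hAH : A ⊓ H = ⊥) : Group.rank H ≤ Group.rank ↥(H ⊔ A) := by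
  have hA : A.subgroupOf H = ⊥ := subgroupOf_eq_bot.mpr (disjoint_iff.mpr hAH)
  let e : ↥(H ⊔ A) ⧸ A.subgroupOf (H ⊔ A) ≃* H :=
    (QuotientGroup.quotientInfEquivProdNormalQuotient H A).symm.trans
      ((QuotientGroup.quotientMulEquivOfEq hA).trans QuotientGroup.quotientBot)
  let f : ↥(H ⊔ A) →* H := e.toMonoidHom.comp (QuotientGroup.mk' _)
  have hf : Function.Surjective f := e.surjective.comp (QuotientGroup.mk'_surjective _)
  exact Group.rank_le_of_surjective f hf

theorem rank_mul_card_le_rank_mul_index [Group.FG G] {A H : Subgroup G} [A.Normal]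
    [H.FiniteIndex] (hAH : A ⊓ H = ⊥) :
    Group.rank H * Nat.card A ≤ Group.rank G * H.index := by
  have hHK : H ≤ H ⊔ A := le_sup_left
  have := finiteIndex_of_le hHK
  have hindex : H.relIndex (H ⊔ A) * (H ⊔ A).index = H.index := relIndex_mul_index hHK
  have hrel : H.relIndex (H ⊔ A) ≠ 0 :=
    left_ne_zero_of_mul (hindex ▸ FiniteIndex.index_ne_zero)
  calc Group.rank H * Nat.card A
      ≤ ((H ⊔ A).index * Group.rank G) * H.relIndex (H ⊔ A) :=
        Nat.mul_le_mul ((rank_le_rank_sup_of_inf_eq_bot hAH).trans (rank_le_index_mul_rank _))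
          (card_le_relIndex_of_inf_eq_bot hAH le_sup_right hrel)
    _ = Group.rank G * H.index := by rw [← hindex]; ring

theorem rank_div_index_le [Group.FG G] {A H : Subgroup G} [A.Normal] [Finite A]
    [H.FiniteIndex] (hAH : A ⊓ H = ⊥) :
    (Group.rank H : ℝ) / H.index ≤ Group.rank G / Nat.card A := by
  rw [div_le_div_iff₀ (by exact_mod_cast Nat.pos_of_ne_zero FiniteIndex.index_ne_zero)
    (by exact_mod_cast Nat.card_pos)]
  exact_mod_cast rank_mul_card_le_rank_mul_index hAH

theorem eventually_inf_eq_bot_of_iInf_eq_bot {ι : Type*} [Preorder ι] {Γc : ι → Subgroup G}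
    (hanti : Antitone Γc) (hint : ⨅ j, Γc j = ⊥) (A : Subgroup G) [Finite A] :
    ∀ᶠ j in atTop, A ⊓ Γc j = ⊥ := by
  have hleave : ∀ x ∈ (A : Set G), ∀ᶠ j in atTop, x ∈ Γc j → x = 1 := by
    intro x _
    by_cases hx : ∀ j, x ∈ Γc j
    · exact Eventually.of_forall fun _ _ => by simpa [hint] using mem_iInf.mpr hx
    · obtain ⟨j, hj⟩ := not_forall.mp hx
      exact eventually_ge_atTop j |>.mono fun k hk hxk => absurd (hanti hk hxk) hj
  filter_upwards [(Set.toFinite _).eventually_all.mpr hleave] with j hj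
  exact eq_bot_iff.mpr fun x hx => mem_bot.mpr (hj x hx.1 hx.2)

theorem infinite_of_tendsto_card_atTop {ι : Type*} {l : Filter ι} [l.NeBot]
    {A : ι → Subgroup G} (hA : Tendsto (fun i => Nat.card (A i)) l atTop) : Infinite G := by
  by_contra! hfin
  obtain ⟨i, hi⟩ := (hA.eventually_gt_atTop (Nat.card G)).exists
  exact hi.not_ge (card_le_card_group (A i))

theorem rank_pos_of_finiteIndex [Infinite G] [Group.FG G] (H : Subgroup G) [H.FiniteIndex] :
    0 < Group.rank H := by
  have : Infinite H := by
    by_contra! hfin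
    have := (finite_iff_finite_and_finiteIndex H).mpr ⟨hfin, inferInstance⟩
    exact not_finite G
  exact Group.rank_pos H

end Subgroup

/-- If a finitely generated group `Γ` has finite normal subgroups `Aᵢ` with
`|Aᵢ| → ∞`, then the rank gradient of `Γ` with respect to any chain of finite index
subgroups with trivial intersection is zero. -/
theorem rank_gradient_zero_of_finite_normal_subgroups {Γ : Type*} [Group Γ] [Group.FG Γ]
    (A : ℕ → Subgroup Γ) (hAnorm : ∀ i, (A i).Normal) (hAfin : ∀ i, Finite (A i))
    (hAcard : Tendsto (fun i => Nat.card (A i)) atTop atTop)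
    (Γc : ℕ → Subgroup Γ) (hchain : ∀ j, Γc (j + 1) ≤ Γc j)
    (hfi : ∀ j, (Γc j).FiniteIndex) (hint : (⨅ j, Γc j) = ⊥) :
    Tendsto (fun j => ((d (Γc j) : ℝ) - 1) / (Γc j).index) atTop (nhds 0) := by
  have : Infinite Γ := Subgroup.infinite_of_tendsto_card_atTop hAcard
  have hd : ∀ j, d (Γc j) = Group.rank (Γc j) := fun j => d_eq_rank _
  have hnonneg : ∀ j, 0 ≤ ((d (Γc j) : ℝ) - 1) / (Γc j).index := fun j => by
    have hrank : (1 : ℝ) ≤ Group.rank (Γc j) := by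
      exact_mod_cast Subgroup.rank_pos_of_finiteIndex (Γc j)
    rw [hd]
    exact div_nonneg (sub_nonneg.mpr hrank) (Nat.cast_nonneg _)
  have hbound : ∀ i, ∀ᶠ j in atTop,
      ((d (Γc j) : ℝ) - 1) / (Γc j).index ≤ Group.rank Γ / Nat.card (A i) := fun i => by
    filter_upwards [Subgroup.eventually_inf_eq_bot_of_iInf_eq_bot
      (antitone_nat_of_succ_le hchain) hint (A i)] with j hj
    rw [hd]
    exact (div_le_div_of_nonneg_right (by linarith) (Nat.cast_nonneg _)).trans
      (Subgroup.rank_div_index_le hj)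
  have hlim : Tendsto (fun i => (Group.rank Γ : ℝ) / Nat.card (A i)) atTop (nhds 0) :=
    tendsto_const_nhds.div_atTop (tendsto_natCast_atTop_atTop.comp hAcard)
  refine tendsto_order.2 ⟨fun a ha => Eventually.of_forall fun j => ha.trans_le (hnonneg j),
    fun ε hε => ?_⟩
  obtain ⟨i, hi⟩ := (hlim.eventually (gt_mem_nhds hε)).exists
  exact (hbound i).mono fun j hj => hj.trans_lt hi
end

section
/- Let Γ be a group generated by d elements, and let N be a ℤΓ-module generated by t elements. Suppose N₀ ≤ N is a ℤΓ-submodule of finite index b (as abelian groups). Then N₀ can be generated by at most t + (2d+1)·log₂(b) elements as a ℤΓ-module. -/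
/-!
Induction on `b`. Let `p` be the least prime factor of `b` and `M₁ = N₀ + pN`. Then `N/M₁` is an
`𝔽_p`-vector space of some dimension `r ≥ 1` (Cauchy), and `[M₁ : N₀] = b / p^r`. Lift a basis of
`N/M₁` to `w₁, …, w_r ∈ N` and write every `x ∈ N` as `ρ x + (ℤ-combination of the w_j)` with
`ρ x ∈ M₁`. Then `M₁` is generated by the `ρ t` (`t ∈ T`), the `p • w_j` and the `ρ (s • w_j)`
(`s ∈ S ∪ S⁻¹`): if `L` is the submodule they span, the abelian group `L + Σ ℤ w_j` is stable
under `S ∪ S⁻¹`, hence under `Γ`, and contains `T`, so it is all of `N`; and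
`(Σ ℤ w_j) ∩ M₁ ⊆ Σ ℤ p w_j ⊆ L`. This is `t + (2d+1) r` generators, and the induction
hypothesis applied to `N₀ ≤ M₁` costs `(2d+1) log₂ (b / p^r) ≤ (2d+1) (log₂ b - r)` more.
-/

open Submodule MonoidAlgebra Pointwise

section MonoidAlgebraModule

variable {Γ N : Type*} [Monoid Γ] [AddCommGroup N] [Module (MonoidAlgebra ℤ Γ) N]

theorem smul_mem_of_submonoidClosure_eq_top {S : Set Γ} (hS : Submonoid.closure S = ⊤)
    {V : Submodule ℤ N} (hV : ∀ s ∈ S, ∀ x ∈ V, of ℤ Γ s • x ∈ V) (a : MonoidAlgebra ℤ Γ)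
    {x : N} (hx : x ∈ V) : a • x ∈ V := by
  have hΓ : ∀ γ : Γ, ∀ x ∈ V, of ℤ Γ γ • x ∈ V := by
    intro γ
    induction hS ▸ Submonoid.mem_top γ using Submonoid.closure_induction with
    | mem s hs => exact hV s hs
    | one => exact fun x hx => by rwa [map_one, one_smul]
    | mul γ δ _ _ hγ hδ => exact fun x hx => by rw [map_mul, mul_smul]; exact hγ _ (hδ x hx)
  induction a using MonoidAlgebra.induction_on with
  | of γ => exact hΓ γ x hx
  | add a a' ha ha' => rw [add_smul]; exact V.add_mem ha ha'
  | smul n a ha => rw [smul_assoc]; exact V.smul_mem n ha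

theorem eq_of_le_of_sup_span_int {S : Set Γ} (hS : Submonoid.closure S = ⊤) {T : Set N}
    (hT : span (MonoidAlgebra ℤ Γ) T = ⊤) {L M : Submodule (MonoidAlgebra ℤ Γ) N} {G : Set N}
    (hLM : L ≤ M) (hGM : span ℤ G ⊓ M.restrictScalars ℤ ≤ L.restrictScalars ℤ)
    (hTG : ∀ t ∈ T, t ∈ L.restrictScalars ℤ ⊔ span ℤ G)
    (hSG : ∀ s ∈ S, ∀ g ∈ G, of ℤ Γ s • g ∈ L.restrictScalars ℤ ⊔ span ℤ G) : L = M := by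
  set V := L.restrictScalars ℤ ⊔ span ℤ G
  have hV : ∀ s ∈ S, ∀ x ∈ V, of ℤ Γ s • x ∈ V := by
    intro s hs x hx
    obtain ⟨l, hl, g, hg, rfl⟩ := mem_sup.mp hx
    clear hx
    rw [smul_add]
    refine V.add_mem (mem_sup_left (L.smul_mem _ hl)) ?_
    induction hg using span_induction with
    | mem g hg => exact hSG s hs g hg
    | zero => simp
    | add g g' _ _ hg hg' => rw [smul_add]; exact V.add_mem hg hg'
    | smul n g _ hg => rw [smul_comm]; exact V.smul_mem n hg
  have hVtop : ∀ x, x ∈ V := by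
    let V' : Submodule (MonoidAlgebra ℤ Γ) N :=
      { V.toAddSubmonoid with
        smul_mem' := fun a _ hx => smul_mem_of_submonoidClosure_eq_top hS hV a hx }
    have : span (MonoidAlgebra ℤ Γ) T ≤ V' := span_le.mpr hTG
    exact fun x => this (hT ▸ mem_top)
  refine le_antisymm hLM fun m hm => ?_
  obtain ⟨l, hl, g, hg, rfl⟩ := mem_sup.mp (hVtop m)
  have hgM : g ∈ M := by simpa using M.sub_mem hm (hLM hl)
  exact L.add_mem hl (hGM ⟨hg, hgM⟩)

theorem exists_finset_span_eq_of_sup_span_int_eq_top {S : Finset Γ}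
    (hS : Submonoid.closure (S : Set Γ) = ⊤) {T : Finset N}
    (hT : span (MonoidAlgebra ℤ Γ) (T : Set N) = ⊤) {M : Submodule (MonoidAlgebra ℤ Γ) N}
    {ι : Type*} [Fintype ι] {w : ι → N} {U : Finset N} (hUM : (U : Set N) ⊆ M)
    (hsup : M.restrictScalars ℤ ⊔ span ℤ (Set.range w) = ⊤)
    (hinf : span ℤ (Set.range w) ⊓ M.restrictScalars ℤ ≤ span ℤ (U : Set N)) :
    ∃ T₀ : Finset N, span (MonoidAlgebra ℤ Γ) (T₀ : Set N) = M ∧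
      T₀.card ≤ T.card + U.card + S.card * Fintype.card ι := by
  classical
  have hdecomp : ∀ x, ∃ m ∈ M, x - m ∈ span ℤ (Set.range w) := fun x => by
    obtain ⟨m, hm, y, hy, rfl⟩ := mem_sup.mp (hsup ▸ mem_top : x ∈ _)
    exact ⟨m, hm, by simpa using hy⟩
  choose ρ hρM hρw using hdecomp
  let T₀ := T.image ρ ∪ U ∪ (S ×ˢ Finset.univ).image fun q => ρ (of ℤ Γ q.1 • w q.2)
  refine ⟨T₀, ?_, ?_⟩
  · set L := span (MonoidAlgebra ℤ Γ) (T₀ : Set N)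
    have hLM : L ≤ M := by
      refine span_le.mpr fun x hx => ?_
      simp only [T₀, Finset.coe_union, Finset.coe_image, Set.mem_union, Set.mem_image] at hx
      rcases hx with (⟨t, -, rfl⟩ | hxU) | ⟨q, -, rfl⟩
      · exact hρM t
      · exact hUM hxU
      · exact hρM _
    have hwL : span ℤ (Set.range w) ⊓ M.restrictScalars ℤ ≤ L.restrictScalars ℤ :=
      hinf.trans (span_le.mpr fun x hx => subset_span (by simp [T₀, Finset.mem_coe.mp hx]))
    have hρL (x : N) (hx : ρ x ∈ T₀) : x ∈ L.restrictScalars ℤ ⊔ span ℤ (Set.range w) := by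
      rw [← add_sub_cancel (ρ x) x]
      exact add_mem_sup (subset_span hx) (hρw x)
    refine eq_of_le_of_sup_span_int hS hT hLM hwL (fun t ht => hρL t ?_)
      fun s hs g hg => hρL _ ?_
    · exact Finset.mem_union_left _ (Finset.mem_union_left _ (Finset.mem_image_of_mem ρ ht))
    · obtain ⟨j, rfl⟩ := hg
      exact Finset.mem_union_right _ (Finset.mem_image.mpr ⟨(s, j), by simpa using hs, rfl⟩)
  · calc T₀.card ≤ (T.image ρ).card + U.card + ((S ×ˢ Finset.univ).image fun q =>
          ρ (of ℤ Γ q.1 • w q.2)).card :=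
        (Finset.card_union_le _ _).trans (add_le_add_left (Finset.card_union_le _ _) _)
      _ ≤ T.card + U.card + S.card * Fintype.card ι := by
        rw [← Finset.card_univ, ← Finset.card_product]
        exact add_le_add (add_le_add Finset.card_image_le le_rfl) Finset.card_image_le

end MonoidAlgebraModule

theorem exists_span_int_sup_eq_top_of_nsmul_mem {N : Type*} [AddCommGroup N] (p : ℕ)
    [Fact p.Prime] (M : Submodule ℤ N) [Finite (N ⧸ M)] (hpM : ∀ x, p • x ∈ M) :
    ∃ (r : ℕ) (w : Fin r → N), Nat.card (N ⧸ M) = p ^ r ∧ M ⊔ span ℤ (Set.range w) = ⊤ ∧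
      span ℤ (Set.range w) ⊓ M ≤ span ℤ (Set.range (p • w)) := by
  -- A `have` suffices: any `𝔽_p`-structure induces the given `ℤ`-action.
  have : Module (ZMod p) (N ⧸ M) := AddCommGroup.zmodModule fun x => by
    induction x using Submodule.Quotient.induction_on with
    | H x => rw [← Submodule.Quotient.mk_smul, Submodule.Quotient.mk_eq_zero]; exact hpM x
  have : Fintype (N ⧸ M) := Fintype.ofFinite _
  have : Module.Finite (ZMod p) (N ⧸ M) := Module.Finite.of_finite
  let v : Module.Basis (Fin (Module.finrank (ZMod p) (N ⧸ M))) (ZMod p) (N ⧸ M) :=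
    Module.finBasis (ZMod p) (N ⧸ M)
  choose w hw using fun j => M.mkQ_surjective (v j)
  refine ⟨_, w, ?_, ?_, ?_⟩
  · rw [Nat.card_eq_fintype_card, Module.card_eq_pow_finrank (K := ZMod p), ZMod.card]
  · have hv : M.mkQ ∘ w = v := funext hw
    rw [← map_mkQ_eq_top, map_span, ← Set.range_comp, hv,
      ← restrictScalars_span ℤ (ZMod p) ZMod.intCast_surjective, v.span_eq, restrictScalars_top]
  · intro x ⟨hxw, hxM⟩
    obtain ⟨c, rfl⟩ := (mem_span_range_iff_exists_fun ℤ).mp hxw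
    have hc : ∑ j, (c j : ZMod p) • v j = 0 := by
      simp_rw [Int.cast_smul_eq_zsmul, ← hw, ← map_zsmul, ← map_sum]
      exact (Submodule.Quotient.mk_eq_zero M).mpr hxM
    have hdvd : ∀ j, (p : ℤ) ∣ c j := fun j => (ZMod.intCast_zmod_eq_zero_iff_dvd _ _).mp
      (Fintype.linearIndependent_iff.mp v.linearIndependent _ hc j)
    choose e he using hdvd
    refine (mem_span_range_iff_exists_fun ℤ).mpr ⟨e, ?_⟩
    simp [he, mul_smul, smul_comm (e _)]

theorem exists_finset_span_eq_of_nsmul_mem {Γ N : Type*} [Group Γ] [AddCommGroup N]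
    [Module (MonoidAlgebra ℤ Γ) N] (S : Finset Γ) (hS : Subgroup.closure (S : Set Γ) = ⊤)
    (T : Finset N) (hT : span (MonoidAlgebra ℤ Γ) (T : Set N) = ⊤) (p : ℕ) [Fact p.Prime]
    (M : Submodule (MonoidAlgebra ℤ Γ) N) [Finite (N ⧸ M)] (hpM : ∀ x, p • x ∈ M) :
    ∃ r, Nat.card (N ⧸ M) = p ^ r ∧ ∃ T₀ : Finset N,
      span (MonoidAlgebra ℤ Γ) (T₀ : Set N) = M ∧ T₀.card ≤ T.card + (2 * S.card + 1) * r := by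
  classical
  let e := Quotient.restrictScalarsEquiv ℤ M
  have : Finite (N ⧸ M.restrictScalars ℤ) := Finite.of_equiv _ e.toEquiv.symm
  obtain ⟨r, w, hcard, hsup, hinf⟩ :=
    exists_span_int_sup_eq_top_of_nsmul_mem p (M.restrictScalars ℤ) hpM
  refine ⟨r, (Nat.card_congr e.toEquiv).symm.trans hcard, ?_⟩
  have hS' : Submonoid.closure ((S ∪ S⁻¹ : Finset Γ) : Set Γ) = ⊤ := by
    rw [Finset.coe_union, Finset.coe_inv, ← Subgroup.closure_toSubmonoid, hS,
      Subgroup.top_toSubmonoid]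
  have hpw : ((Finset.univ.image (p • w) : Finset N) : Set N) ⊆ M := by
    simp [Set.subset_def, hpM]
  obtain ⟨T₀, hT₀, hT₀card⟩ := exists_finset_span_eq_of_sup_span_int_eq_top hS' hT hpw hsup
    (by rwa [Finset.coe_image, Finset.coe_univ, Set.image_univ])
  refine ⟨T₀, hT₀, hT₀card.trans ?_⟩
  have hS'card : (S ∪ S⁻¹).card ≤ 2 * S.card :=
    (Finset.card_union_le _ _).trans (by rw [Finset.card_inv, two_mul])
  have hpwcard : (Finset.univ.image (p • w)).card ≤ r :=
    Finset.card_image_le.trans (by simp)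
  rw [Fintype.card_fin]
  nlinarith

section Quotients

variable {R N : Type*} [Ring R] [AddCommGroup N] [Module R N]

theorem Submodule.eq_top_of_card_quotient_eq_one {N₀ : Submodule R N}
    (h : Nat.card (N ⧸ N₀) = 1) : N₀ = ⊤ :=
  Quotient.subsingleton_iff.mp (Nat.card_eq_one_iff_unique.mp h).1

theorem Submodule.sup_range_nsmul_ne_top {N₀ : Submodule R N} [Finite (N ⧸ N₀)] {p : ℕ}
    (hp : p.Prime) (hdvd : p ∣ Nat.card (N ⧸ N₀)) :
    N₀ ⊔ LinearMap.range (p • LinearMap.id : N →ₗ[R] N) ≠ ⊤ := by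
  intro htop
  have hsurj : Function.Surjective fun y : N ⧸ N₀ => p • y := by
    intro y
    obtain ⟨n, rfl⟩ := N₀.mkQ_surjective y
    obtain ⟨a, ha, _, ⟨m, rfl⟩, rfl⟩ := mem_sup.mp (htop ▸ mem_top : n ∈ _)
    refine ⟨N₀.mkQ m, ?_⟩
    simp [(Submodule.Quotient.mk_eq_zero N₀).mpr ha]
  have := Fact.mk hp
  obtain ⟨x, hx⟩ := exists_prime_addOrderOf_dvd_card' p hdvd
  have hx0 : x = 0 := Finite.injective_iff_surjective.mpr hsurj <| by
    simp only [smul_zero, ← hx, addOrderOf_nsmul_eq_zero]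
  exact hp.ne_one (by rw [← hx, hx0, addOrderOf_zero])

theorem Submodule.card_quotient_comap_subtype_mul {N₀ M : Submodule R N} (h : N₀ ≤ M) :
    Nat.card (M ⧸ N₀.comap M.subtype) * Nat.card (N ⧸ M) = Nat.card (N ⧸ N₀) := by
  have hker : LinearMap.ker (N₀.mkQ ∘ₗ M.subtype) = N₀.comap M.subtype := by
    rw [LinearMap.ker_comp, ker_mkQ]
  have e := (quotEquivOfEq _ _ hker.symm).trans (N₀.mkQ ∘ₗ M.subtype).quotKerEquivRange
  rw [Nat.card_congr e.toEquiv, LinearMap.range_comp, range_subtype,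
    card_quotient_mul_card_quotient M N₀ h]

theorem Submodule.exists_finset_span_eq_top_of_span_eq {M : Submodule R N} {T : Finset N}
    (hT : span R (T : Set N) = M) :
    ∃ T' : Finset M, T'.card ≤ T.card ∧ span R (T' : Set M) = ⊤ := by
  classical
  subst hT
  refine ⟨T.preimage Subtype.val Subtype.val_injective.injOn, ?_, ?_⟩
  · exact (Finset.card_preimage _ _ _).trans_le (Finset.card_filter_le _ _)
  · rw [Finset.coe_preimage]; exact span_span_coe_preimage

theorem Submodule.exists_finset_span_eq_of_span_comap_subtype {N₀ M : Submodule R N}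
    (h : N₀ ≤ M) {T' : Finset M} (hT' : span R (T' : Set M) = N₀.comap M.subtype) :
    ∃ T : Finset N, span R (T : Set N) = N₀ ∧ T.card ≤ T'.card := by
  classical
  refine ⟨T'.image M.subtype, ?_, Finset.card_image_le⟩
  rw [Finset.coe_image, span_image, hT', map_comap_subtype, inf_eq_right.mpr h]

end Quotients

theorem add_logb_le_logb_mul_pow {b p : ℕ} (hb : 0 < b) (hp : 2 ≤ p) (r : ℕ) :
    r + Real.logb 2 b ≤ Real.logb 2 ↑(b * p ^ r) := by
  have hp0 : (0 : ℝ) < p := by positivity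
  have hlogp : 1 ≤ Real.logb 2 p := by
    rw [Real.le_logb_iff_rpow_le one_lt_two hp0]; exact_mod_cast hp
  push_cast
  rw [Real.logb_mul (by positivity) (by positivity), Real.logb_pow]
  nlinarith

universe u

theorem exists_finset_span_eq_card_le_logb {Γ : Type*} [Group Γ] (S : Finset Γ)
    (hS : Subgroup.closure (S : Set Γ) = ⊤) (b : ℕ) :
    ∀ {N : Type u} [AddCommGroup N] [Module (MonoidAlgebra ℤ Γ) N] (T : Finset N),
      span (MonoidAlgebra ℤ Γ) (T : Set N) = ⊤ → ∀ N₀ : Submodule (MonoidAlgebra ℤ Γ) N,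
      Nat.card (N ⧸ N₀) = b → 0 < b → ∃ T₀ : Finset N,
        span (MonoidAlgebra ℤ Γ) (T₀ : Set N) = N₀ ∧
        (T₀.card : ℝ) ≤ T.card + (2 * S.card + 1) * Real.logb 2 b := by
  induction b using Nat.strong_induction_on with
  | _ b IH =>
  intro N _ _ T hT N₀ hidx hb
  have : Finite (N ⧸ N₀) := Nat.finite_of_card_ne_zero (hidx ▸ hb.ne')
  rcases eq_or_ne b 1 with rfl | hb1
  · exact ⟨T, hT.trans (eq_top_of_card_quotient_eq_one hidx).symm, by simp⟩
  have hp : b.minFac.Prime := Nat.minFac_prime hb1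
  have := Fact.mk hp
  set p := b.minFac
  set M₁ := N₀ ⊔ LinearMap.range (p • LinearMap.id : N →ₗ[MonoidAlgebra ℤ Γ] N)
  have hN₀M₁ : N₀ ≤ M₁ := le_sup_left
  have : Finite (N ⧸ M₁) := Finite.of_surjective _ (factor_surjective hN₀M₁)
  obtain ⟨r, hr, T₁, hT₁, hT₁card⟩ :=
    exists_finset_span_eq_of_nsmul_mem S hS T hT p M₁ fun x => mem_sup_right ⟨x, rfl⟩
  have hr0 : r ≠ 0 := by
    rintro rfl
    exact sup_range_nsmul_ne_top hp (by rw [hidx]; exact Nat.minFac_dvd b)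
      (eq_top_of_card_quotient_eq_one hr)
  obtain ⟨T₁', hT₁'card, hT₁'⟩ := exists_finset_span_eq_top_of_span_eq hT₁
  have hb' := card_quotient_comap_subtype_mul hN₀M₁
  rw [hidx, hr] at hb'
  set b' := Nat.card (M₁ ⧸ N₀.comap M₁.subtype)
  have hb'0 : 0 < b' := Nat.pos_of_mul_pos_right (hb' ▸ hb)
  have hb'b : b' < b := by
    have : 2 ≤ p ^ r := hp.two_le.trans (Nat.le_self_pow hr0 p)
    nlinarith
  obtain ⟨T₀', hT₀', hT₀'card⟩ := IH b' hb'b T₁' hT₁' _ rfl hb'0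
  obtain ⟨T₀, hT₀, hT₀card⟩ := exists_finset_span_eq_of_span_comap_subtype hN₀M₁ hT₀'
  refine ⟨T₀, hT₀, ?_⟩
  have hT₀T₀' : (T₀.card : ℝ) ≤ T₀'.card := by exact_mod_cast hT₀card
  have hT₁'T₁ : (T₁'.card : ℝ) ≤ T₁.card := by exact_mod_cast hT₁'card
  have hT₁T : (T₁.card : ℝ) ≤ T.card + (2 * S.card + 1) * r := by exact_mod_cast hT₁card
  calc (T₀.card : ℝ) ≤ T.card + (2 * S.card + 1) * (r + Real.logb 2 b') := by linarith
    _ ≤ T.card + (2 * S.card + 1) * Real.logb 2 b := by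
      rw [← hb']
      gcongr
      exact add_logb_le_logb_mul_pow hb'0 hp.two_le r

/-- Let `Γ` be a group generated by `d` elements and `N` a `ℤΓ`-module generated by
`t` elements. If `N₀ ≤ N` is a `ℤΓ`-submodule of finite (additive) index `b`, then
`N₀` is generated as a `ℤΓ`-module by at most `t + (2d+1)·log₂ b` elements. -/
theorem submodule_generation_bound {Γ : Type*} [Group Γ] (dn : ℕ)
    (hΓ : ∃ S : Finset Γ, S.card = dn ∧ Subgroup.closure (S : Set Γ) = ⊤)
    {N : Type*} [AddCommGroup N] [Module (MonoidAlgebra ℤ Γ) N] (t : ℕ)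
    (hN : ∃ T : Finset N, T.card = t ∧ Submodule.span (MonoidAlgebra ℤ Γ) (T : Set N) = ⊤)
    (N₀ : Submodule (MonoidAlgebra ℤ Γ) N) (b : ℕ) (hb : 0 < b)
    (hidx : Nat.card (N ⧸ N₀) = b) :
    ∃ T₀ : Finset N, Submodule.span (MonoidAlgebra ℤ Γ) (T₀ : Set N) = N₀ ∧
      (T₀.card : ℝ) ≤ t + (2 * dn + 1) * Real.logb 2 b := by
  obtain ⟨S, rfl, hS⟩ := hΓ
  obtain ⟨T, rfl, hT⟩ := hN
  exact exists_finset_span_eq_card_le_logb S hS b T hT N₀ hidx hb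
end

section
/- Let Γ be a residually finite group generated by two finitely generated subgroups G₁ and G₂ with A = G₁ ∩ G₂ infinite, and let (Γₙ) be a normal chain in Γ (with [A : A ∩ Γₙ] → ∞). Then RG(Γ,(Γₙ)) ≤ RG(G₁,(G₁ ∩ Γₙ)) + RG(G₂,(G₂ ∩ Γₙ)). -/
open Filter

/-! Let `N` be a normal subgroup of finite index and `A = G₁ ⊓ G₂`. Choose transversals `yᵢ` of
`N Gᵢ` and `x` of `N A`, and for each `x` elements `bᵢ ∈ N` with `x ∈ bᵢ yᵢ Gᵢ`. Let `H` be
generated by the conjugates `yᵢ (N ⊓ Gᵢ) yᵢ⁻¹` and the `bᵢ`. Two elements of `H y G` that differ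
by an element of `N` differ by an element of `H`; this makes `⋃ₓ H x A` stable under right
multiplication by `G₁` and `G₂`, hence equal to `Γ`, and then forces `N ≤ H`. Counting generators,
`d(N) ≤ [Γ : NG₁] d(N ⊓ G₁) + [Γ : NG₂] d(N ⊓ G₂) + 2 [Γ : NA]`, and dividing by
`[Γ : N] = [Gᵢ : N ⊓ Gᵢ] [Γ : NGᵢ] = [A : N ⊓ A] [Γ : NA]` leaves an error `O(1 / [A : N ⊓ A])`,
which vanishes along the chain. -/

open Pointwise DoubleCoset

section Generation

variable {Γ : Type*} [Group Γ]

theorem mul_mem_doubleCoset_right {H K : Subgroup Γ} {a b k : Γ}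
    (hb : b ∈ doubleCoset a H K) (hk : k ∈ K) : b * k ∈ doubleCoset a H K := by
  obtain ⟨h, hh, g, hg, rfl⟩ := mem_doubleCoset.mp hb
  exact mem_doubleCoset.mpr ⟨h, hh, g * k, mul_mem hg hk, by group⟩

theorem Set.eq_univ_of_mul_mem {Y s : Set Γ} (hs : Subgroup.closure s = ⊤) (hY : Y.Nonempty)
    (hmul : ∀ γ ∈ Y, ∀ g ∈ s, γ * g ∈ Y ∧ γ * g⁻¹ ∈ Y) : Y = Set.univ := by
  have hstable : ∀ g, ∀ γ ∈ Y, γ * g ∈ Y := by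
    intro g
    induction (hs ▸ Subgroup.mem_top g : g ∈ Subgroup.closure s) using
      Subgroup.closure_induction'' with
    | mem g hg => exact fun γ hγ => (hmul γ hγ g hg).1
    | inv_mem g hg => exact fun γ hγ => (hmul γ hγ g hg).2
    | one => simp
    | mul u v _ _ hu hv => exact fun γ hγ => mul_assoc γ u v ▸ hv _ (hu γ hγ)
  obtain ⟨γ₀, hγ₀⟩ := hY
  exact Set.eq_univ_of_forall fun γ => by simpa using hstable (γ₀⁻¹ * γ) γ₀ hγ₀

variable {N H : Subgroup Γ} [hN : N.Normal]

theorem mul_inv_mem_of_mem_doubleCoset (hHN : H ≤ N) {G : Subgroup Γ} {y z z' : Γ}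
    (hy : (N ⊓ G).map (MulAut.conj y).toMonoidHom ≤ H)
    (hz : z ∈ doubleCoset y H G) (hz' : z' ∈ doubleCoset y H G) (hzz' : z * z'⁻¹ ∈ N) :
    z * z'⁻¹ ∈ H := by
  obtain ⟨h, hh, g, hg, rfl⟩ := mem_doubleCoset.mp hz
  obtain ⟨h', hh', g', hg', rfl⟩ := mem_doubleCoset.mp hz'
  have hgN : g * g'⁻¹ ∈ N := by
    have := hN.conj_mem _ (mul_mem (mul_mem (inv_mem (hHN hh)) hzz') (hHN hh')) y⁻¹
    convert this using 1
    group
  have hconj : y * (g * g'⁻¹) * y⁻¹ ∈ H := by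
    simpa using hy (Subgroup.mem_map_of_mem _
      (Subgroup.mem_inf.mpr ⟨hgN, mul_mem hg (inv_mem hg')⟩))
  convert mul_mem (mul_mem hh hconj) (inv_mem hh') using 1
  group

variable {A G : Subgroup Γ} {x : Γ ⧸ (N ⊔ A) → Γ} {y : Γ ⧸ (N ⊔ G) → Γ}

theorem exists_mul_mem_doubleCoset (hHN : H ≤ N) (hAG : A ≤ G)
    (hx : ∀ q, (x q : Γ ⧸ (N ⊔ A)) = q)
    (hy : ∀ c, (N ⊓ G).map (MulAut.conj (y c)).toMonoidHom ≤ H)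
    (hxy : ∀ q, x q ∈ doubleCoset (y (x q)) H G) {q : Γ ⧸ (N ⊔ A)} {γ g : Γ}
    (hγ : γ ∈ doubleCoset (x q) H A) (hg : g ∈ G) :
    ∃ q', γ * g ∈ doubleCoset (x q') H A := by
  obtain ⟨h, hh, α, hα, rfl⟩ := mem_doubleCoset.mp hγ
  set q' : Γ ⧸ (N ⊔ A) := QuotientGroup.mk (x q * α * g)
  have hq' : (x q * α * g)⁻¹ * x q' ∈ (A : Set Γ) * N := by
    rw [← Subgroup.mul_normal, sup_comm, SetLike.mem_coe, ← QuotientGroup.eq, hx]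
  obtain ⟨a, ha, n, hn, hprod : a * n = _⟩ := hq'
  have hxq' : x q' = x q * α * g * (a * n) := by
    rw [hprod]; group
  have hc : ((x q' : Γ) : Γ ⧸ (N ⊔ G)) = (x q : Γ) := by
    rw [eq_comm, QuotientGroup.eq, hxq']
    have hmem : α * g * a * n ∈ N ⊔ G := mul_mem
      (Subgroup.mem_sup_right (mul_mem (mul_mem (hAG hα) hg) (hAG ha))) (Subgroup.mem_sup_left hn)
    convert hmem using 1
    group
  have hz : x q * (α * g * a) ∈ doubleCoset (y (x q)) H G :=
    mul_mem_doubleCoset_right (hxy q) (mul_mem (mul_mem (hAG hα) hg) (hAG ha))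
  have hz' : x q' ∈ doubleCoset (y (x q)) H G := hc ▸ hxy q'
  have hzN : x q * (α * g * a) * (x q')⁻¹ ∈ N := by
    convert hN.conj_mem _ (inv_mem hn) (x q * (α * g * a)) using 1
    rw [hxq']; group
  have hzH := mul_inv_mem_of_mem_doubleCoset hHN (hy _) hz hz' hzN
  refine ⟨q', mem_doubleCoset.mpr ⟨_, mul_mem hh hzH, a⁻¹, inv_mem ha, ?_⟩⟩
  group

theorem le_of_conj_inf_le_of_mem_doubleCoset {G₁ G₂ : Subgroup Γ} (hHN : H ≤ N)
    (hgen : G₁ ⊔ G₂ = ⊤) (hA₁ : A ≤ G₁) (hA₂ : A ≤ G₂) (hx : ∀ q, (x q : Γ ⧸ (N ⊔ A)) = q)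
    {y₁ : Γ ⧸ (N ⊔ G₁) → Γ} {y₂ : Γ ⧸ (N ⊔ G₂) → Γ} (hy₁one : y₁ (1 : Γ) = 1)
    (hy₁ : ∀ c, (N ⊓ G₁).map (MulAut.conj (y₁ c)).toMonoidHom ≤ H)
    (hy₂ : ∀ c, (N ⊓ G₂).map (MulAut.conj (y₂ c)).toMonoidHom ≤ H)
    (hxy₁ : ∀ q, x q ∈ doubleCoset (y₁ (x q)) H G₁)
    (hxy₂ : ∀ q, x q ∈ doubleCoset (y₂ (x q)) H G₂) :
    N ≤ H := by
  have hcover : ⋃ q, doubleCoset (x q) H A = Set.univ := by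
    refine Set.eq_univ_of_mul_mem (s := G₁ ∪ G₂) ?_
      ⟨_, Set.mem_iUnion.mpr ⟨(1 : Γ), mem_doubleCoset_self _ _ _⟩⟩ ?_
    · rw [Subgroup.closure_union, Subgroup.closure_eq, Subgroup.closure_eq, hgen]
    · simp only [Set.mem_iUnion]
      rintro γ ⟨q, hγ⟩ g (hg | hg)
      · exact ⟨exists_mul_mem_doubleCoset hHN hA₁ hx hy₁ hxy₁ hγ hg,
          exists_mul_mem_doubleCoset hHN hA₁ hx hy₁ hxy₁ hγ (inv_mem hg)⟩
      · exact ⟨exists_mul_mem_doubleCoset hHN hA₂ hx hy₂ hxy₂ hγ hg,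
          exists_mul_mem_doubleCoset hHN hA₂ hx hy₂ hxy₂ hγ (inv_mem hg)⟩
  intro m hm
  obtain ⟨q, hq⟩ := Set.mem_iUnion.mp (hcover ▸ Set.mem_univ m)
  obtain ⟨h, hh, α, hα, rfl⟩ := mem_doubleCoset.mp hq
  have hxα : x q * α ∈ N := by
    convert mul_mem (inv_mem (hHN hh)) hm using 1
    group
  have hc : ((x q : Γ) : Γ ⧸ (N ⊔ G₁)) = (1 : Γ) := by
    rw [QuotientGroup.eq]
    convert mul_mem (Subgroup.mem_sup_right (hA₁ hα)) (Subgroup.mem_sup_left (inv_mem hxα))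
      using 1
    group
  have hz : x q * α ∈ doubleCoset (y₁ (1 : Γ)) H G₁ := by
    have := mul_mem_doubleCoset_right (hxy₁ q) (hA₁ hα)
    rwa [hc] at this
  have hone : 1 ∈ doubleCoset (y₁ (1 : Γ)) H G₁ := by
    rw [hy₁one]; exact mem_doubleCoset_self H G₁ 1
  have hzH := mul_inv_mem_of_mem_doubleCoset hHN (hy₁ (1 : Γ)) hz hone (by simpa using hxα)
  simpa [mul_assoc] using mul_mem hh hzH

end Generation

section Rank

variable {Γ : Type*} [Group Γ]

theorem d_closure_le_card (U : Finset Γ) : d (Subgroup.closure (U : Set Γ)) ≤ U.card := by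
  classical
  set K := Subgroup.closure (U : Set Γ)
  let V : Finset K := U.preimage Subtype.val Subtype.val_injective.injOn
  have hV : Subgroup.closure (V : Set K) = ⊤ := by
    rw [Finset.coe_preimage, Subgroup.closure_closure_coe_preimage]
  calc d K ≤ V.card := Nat.sInf_le ⟨V, rfl, hV⟩
    _ ≤ U.card := by
      rw [Finset.card_preimage]
      exact Finset.card_filter_le _ _

theorem exists_finset_card_eq_d (G : Type*) [Group G] [Group.FG G] :
    ∃ S : Finset G, S.card = d G ∧ Subgroup.closure (S : Set G) = ⊤ := by
  obtain ⟨n, S, hS, hcl⟩ := Group.fg_iff'.mp ‹_›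
  exact Nat.sInf_mem (s := {n | ∃ S : Finset G, S.card = n ∧ Subgroup.closure (S : Set G) = ⊤})
    ⟨n, S, hS, hcl⟩

theorem MonoidHom.exists_finset_card_le_d_closure_eq_range {G : Type*} [Group G] [Group.FG G]
    (f : G →* Γ) : ∃ S : Finset Γ, S.card ≤ d G ∧ Subgroup.closure (S : Set Γ) = f.range := by
  classical
  obtain ⟨T, hT, hcl⟩ := exists_finset_card_eq_d G
  exact ⟨T.image f, hT ▸ Finset.card_image_le,
    by rw [Finset.coe_image, ← MonoidHom.map_closure, hcl, ← MonoidHom.range_eq_map]⟩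

theorem Subgroup.exists_finset_card_le_d_closure_eq_inf (K L : Subgroup Γ)
    [Group.FG (K.subgroupOf L)] :
    ∃ S : Finset Γ, S.card ≤ d (K.subgroupOf L) ∧ Subgroup.closure (S : Set Γ) = K ⊓ L := by
  have hrange : (L.subtype.comp (K.subgroupOf L).subtype).range = K ⊓ L := by
    rw [MonoidHom.range_comp, Subgroup.range_subtype, Subgroup.subgroupOf_map_subtype]
  exact hrange ▸
    (L.subtype.comp (K.subgroupOf L).subtype).exists_finset_card_le_d_closure_eq_range

theorem QuotientGroup.exists_section_map_one (K : Subgroup Γ) :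
    ∃ y : Γ ⧸ K → Γ, (∀ c, (y c : Γ ⧸ K) = c) ∧ y (1 : Γ) = 1 := by
  classical
  refine ⟨Function.update Quotient.out ((1 : Γ) : Γ ⧸ K) 1, fun c => ?_, Function.update_self ..⟩
  by_cases hc : c = (1 : Γ)
  · rw [hc, Function.update_self]
  · rw [Function.update_of_ne hc, QuotientGroup.out_eq']

theorem exists_mem_eq_mul_mul_of_mk_eq {N G : Subgroup Γ} [hN : N.Normal] {γ y : Γ}
    (h : (y : Γ ⧸ (N ⊔ G)) = γ) : ∃ b ∈ N, ∃ g ∈ G, γ = b * y * g := by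
  have hyγ : y⁻¹ * γ ∈ (N : Set Γ) * G := by
    rw [← Subgroup.normal_mul, SetLike.mem_coe, ← QuotientGroup.eq, h]
  obtain ⟨n, hn, g, hg, hng : n * g = _⟩ := hyγ
  refine ⟨y * n * y⁻¹, hN.conj_mem n hn y, g, hg, ?_⟩
  calc γ = y * (n * g) := by rw [hng, mul_inv_cancel_left]
    _ = y * n * y⁻¹ * y * g := by group

open Finset in
theorem d_le_index_mul_d_add (N G₁ G₂ : Subgroup Γ) [N.Normal] [N.FiniteIndex]
    (hgen : G₁ ⊔ G₂ = ⊤) [Group.FG (N.subgroupOf G₁)] [Group.FG (N.subgroupOf G₂)] :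
    d N ≤ (N ⊔ G₁).index * d (N.subgroupOf G₁) + (N ⊔ G₂).index * d (N.subgroupOf G₂)
      + 2 * (N ⊔ (G₁ ⊓ G₂)).index := by
  classical
  have hfin (K : Subgroup Γ) : Fintype (Γ ⧸ (N ⊔ K)) :=
    have := Subgroup.finiteIndex_of_le (le_sup_left : N ≤ N ⊔ K)
    Fintype.ofFinite _
  have hcard (K : Subgroup Γ) : Fintype.card (Γ ⧸ (N ⊔ K)) = (N ⊔ K).index := by
    rw [Subgroup.index_eq_card, Nat.card_eq_fintype_card]
  obtain ⟨S₁, hS₁card, hS₁⟩ := N.exists_finset_card_le_d_closure_eq_inf G₁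
  obtain ⟨S₂, hS₂card, hS₂⟩ := N.exists_finset_card_le_d_closure_eq_inf G₂
  obtain ⟨y₁, hy₁, hy₁one⟩ := QuotientGroup.exists_section_map_one (N ⊔ G₁)
  obtain ⟨y₂, hy₂, -⟩ := QuotientGroup.exists_section_map_one (N ⊔ G₂)
  let x : Γ ⧸ (N ⊔ (G₁ ⊓ G₂)) → Γ := Quotient.out
  choose b₁ hb₁N g₁ hg₁ hb₁ using
    fun q => exists_mem_eq_mul_mul_of_mk_eq (hy₁ (x q : Γ ⧸ (N ⊔ G₁)))
  choose b₂ hb₂N g₂ hg₂ hb₂ using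
    fun q => exists_mem_eq_mul_mul_of_mk_eq (hy₂ (x q : Γ ⧸ (N ⊔ G₂)))
  let U : Finset Γ := image₂ (fun c s => y₁ c * s * (y₁ c)⁻¹) univ S₁
    ∪ image₂ (fun c s => y₂ c * s * (y₂ c)⁻¹) univ S₂ ∪ univ.image b₁ ∪ univ.image b₂
  have hUN : Subgroup.closure (U : Set Γ) ≤ N := by
    rw [Subgroup.closure_le]
    intro u hu
    simp only [U, coe_union, Set.mem_union, mem_coe, mem_image₂, mem_image, mem_univ,
      true_and] at hu
    rcases hu with (((⟨c, s, hs, rfl⟩ | ⟨c, s, hs, rfl⟩) | ⟨q, rfl⟩) | ⟨q, rfl⟩)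
    · exact ‹N.Normal›.conj_mem s (hS₁ ▸ Subgroup.subset_closure hs : s ∈ N ⊓ G₁).1 _
    · exact ‹N.Normal›.conj_mem s (hS₂ ▸ Subgroup.subset_closure hs : s ∈ N ⊓ G₂).1 _
    · exact hb₁N q
    · exact hb₂N q
  have hNU : N ≤ Subgroup.closure (U : Set Γ) := by
    refine le_of_conj_inf_le_of_mem_doubleCoset hUN hgen inf_le_left inf_le_right
      QuotientGroup.out_eq' (y₂ := y₂) hy₁one ?_ ?_ (fun q => ?_) (fun q => ?_)
    · intro c
      rw [← hS₁, MonoidHom.map_closure]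
      refine Subgroup.closure_mono ?_
      rintro _ ⟨s, hs, rfl⟩
      simp only [U, coe_union, Set.mem_union, mem_coe]
      exact Or.inl (Or.inl (Or.inl (mem_image₂_of_mem (mem_univ c) hs)))
    · intro c
      rw [← hS₂, MonoidHom.map_closure]
      refine Subgroup.closure_mono ?_
      rintro _ ⟨s, hs, rfl⟩
      simp only [U, coe_union, Set.mem_union, mem_coe]
      exact Or.inl (Or.inl (Or.inr (mem_image₂_of_mem (mem_univ c) hs)))
    · refine mem_doubleCoset.mpr ⟨b₁ q, Subgroup.subset_closure ?_, g₁ q, hg₁ q, hb₁ q⟩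
      simp [U]
    · refine mem_doubleCoset.mpr ⟨b₂ q, Subgroup.subset_closure ?_, g₂ q, hg₂ q, hb₂ q⟩
      simp [U]
  calc d N = d (Subgroup.closure (U : Set Γ)) := by rw [le_antisymm hUN hNU]
    _ ≤ U.card := d_closure_le_card U
    _ ≤ #(image₂ (fun c s => y₁ c * s * (y₁ c)⁻¹) univ S₁)
          + #(image₂ (fun c s => y₂ c * s * (y₂ c)⁻¹) univ S₂)
          + #(univ.image b₁) + #(univ.image b₂) := by
      refine (card_union_le _ _).trans (add_le_add_left ((card_union_le _ _).trans
        (add_le_add_left (card_union_le _ _) _)) _)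
    _ ≤ (N ⊔ G₁).index * #S₁ + (N ⊔ G₂).index * #S₂
          + (N ⊔ (G₁ ⊓ G₂)).index + (N ⊔ (G₁ ⊓ G₂)).index := by
      rw [← hcard, ← hcard, ← hcard, ← card_univ, ← card_univ, ← card_univ]
      gcongr
      exacts [card_image₂_le _ _ _, card_image₂_le _ _ _, card_image_le, card_image_le]
    _ ≤ _ := by
      rw [two_mul, ← add_assoc]
      gcongr

end Rank

section RankGradient

variable {Γ : Type*} [Group Γ]

theorem Subgroup.index_subgroupOf_mul_index_sup (N K : Subgroup Γ) [N.Normal] :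
    (N.subgroupOf K).index * (N ⊔ K).index = N.index := by
  rw [← Subgroup.relIndex, ← Subgroup.relIndex_sup_left, Subgroup.relIndex_mul_index le_sup_left]

theorem d_sub_one_div_index_le (N G₁ G₂ : Subgroup Γ) [N.Normal] [N.FiniteIndex]
    (hgen : G₁ ⊔ G₂ = ⊤) [Group.FG G₁] [Group.FG G₂] :
    ((d N : ℝ) - 1) / N.index ≤
      ((d (N.subgroupOf G₁) : ℝ) - 1) / (N.subgroupOf G₁).index
        + ((d (N.subgroupOf G₂) : ℝ) - 1) / (N.subgroupOf G₂).index
        + 4 / (N.subgroupOf (G₁ ⊓ G₂)).index := by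
  set n₁ := (N.subgroupOf G₁).index
  set n₂ := (N.subgroupOf G₂).index
  set a := (N.subgroupOf (G₁ ⊓ G₂)).index
  have ha : (0 : ℝ) < a := by
    exact_mod_cast Nat.pos_of_ne_zero Subgroup.FiniteIndex.index_ne_zero
  have ha₁ : (a : ℝ) ≤ n₁ := by
    exact_mod_cast Subgroup.relIndex_le_of_le_right inf_le_left Subgroup.FiniteIndex.index_ne_zero
  have ha₂ : (a : ℝ) ≤ n₂ := by
    exact_mod_cast Subgroup.relIndex_le_of_le_right inf_le_right Subgroup.FiniteIndex.index_ne_zero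
  have hD : (d N : ℝ) ≤ (N ⊔ G₁).index * d (N.subgroupOf G₁)
      + (N ⊔ G₂).index * d (N.subgroupOf G₂) + 2 * (N ⊔ (G₁ ⊓ G₂)).index := by
    exact_mod_cast d_le_index_mul_d_add N G₁ G₂ hgen
  have hquot (K : Subgroup Γ) (m : ℝ) :
      (N ⊔ K).index * m / N.index = m / (N.subgroupOf K).index := by
    have := Subgroup.finiteIndex_of_le (le_sup_left : N ≤ N ⊔ K)
    have hK : ((N ⊔ K).index : ℝ) ≠ 0 := by exact_mod_cast Subgroup.FiniteIndex.index_ne_zero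
    rw [← N.index_subgroupOf_mul_index_sup K, Nat.cast_mul, mul_comm (_ : ℝ) (N ⊔ K).index,
      mul_div_mul_left _ _ hK]
  calc ((d N : ℝ) - 1) / N.index ≤ d N / N.index := by gcongr; linarith
    _ ≤ ((N ⊔ G₁).index * d (N.subgroupOf G₁) + (N ⊔ G₂).index * d (N.subgroupOf G₂)
          + 2 * (N ⊔ (G₁ ⊓ G₂)).index) / N.index := by gcongr
    _ = d (N.subgroupOf G₁) / n₁ + d (N.subgroupOf G₂) / n₂ + 2 / a := by
      rw [add_div, add_div, hquot, hquot, mul_comm, hquot]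
    _ = ((d (N.subgroupOf G₁) : ℝ) - 1) / n₁ + ((d (N.subgroupOf G₂) : ℝ) - 1) / n₂
          + (1 / n₁ + 1 / n₂ + 2 / a) := by ring
    _ ≤ _ := by
      have h₁ : 1 / (n₁ : ℝ) ≤ 1 / a := one_div_le_one_div_of_le ha ha₁
      have h₂ : 1 / (n₂ : ℝ) ≤ 1 / a := one_div_le_one_div_of_le ha ha₂
      have h : (4 : ℝ) / a = 1 / a + 1 / a + 2 / a := by ring
      rw [h]
      gcongr

end RankGradient

theorem rank_gradient_amalgam_bound_general {Γ : Type*} [Group Γ]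
    (G₁ G₂ : Subgroup Γ) (hgen : G₁ ⊔ G₂ = ⊤)
    [Group.FG G₁] [Group.FG G₂]
    (Γc : ℕ → Subgroup Γ) (hnorm : ∀ n, (Γc n).Normal)
    (hfi : ∀ n, (Γc n).FiniteIndex)
    (hA : Tendsto (fun n => ((Γc n).subgroupOf (G₁ ⊓ G₂)).index) atTop atTop)
    (L L₁ L₂ : ℝ)
    (hL : Tendsto (fun n => ((d (Γc n) : ℝ) - 1) / (Γc n).index) atTop (nhds L))
    (hL₁ : Tendsto (fun n => ((d ((Γc n).subgroupOf G₁) : ℝ) - 1) /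
      ((Γc n).subgroupOf G₁).index) atTop (nhds L₁))
    (hL₂ : Tendsto (fun n => ((d ((Γc n).subgroupOf G₂) : ℝ) - 1) /
      ((Γc n).subgroupOf G₂).index) atTop (nhds L₂)) :
    L ≤ L₁ + L₂ := by
  have hbound (n : ℕ) := by
    have := hnorm n
    have := hfi n
    exact d_sub_one_div_index_le (Γc n) G₁ G₂ hgen
  have herr : Tendsto (fun n => (4 : ℝ) / ((Γc n).subgroupOf (G₁ ⊓ G₂)).index) atTop (nhds 0) :=
    tendsto_const_nhds.div_atTop (tendsto_natCast_atTop_atTop.comp hA)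
  simpa using le_of_tendsto_of_tendsto' hL ((hL₁.add hL₂).add herr) hbound

/-- If a residually finite group `Γ` is generated by finitely generated subgroups
`G₁, G₂` whose intersection `A` is infinite, then for any normal chain `(Γₙ)` (with
`[A : A ∩ Γₙ] → ∞`) one has
`RG(Γ,(Γₙ)) ≤ RG(G₁,(G₁ ∩ Γₙ)) + RG(G₂,(G₂ ∩ Γₙ))`. -/
theorem rank_gradient_amalgam_bound {Γ : Type*} [Group Γ]
    (hres : ∀ g : Γ, g ≠ 1 → ∃ H : Subgroup Γ, H.Normal ∧ H.FiniteIndex ∧ g ∉ H)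
    (G₁ G₂ : Subgroup Γ) (hgen : G₁ ⊔ G₂ = ⊤)
    [Group.FG G₁] [Group.FG G₂] (hAinf : Infinite (G₁ ⊓ G₂ : Subgroup Γ))
    (Γc : ℕ → Subgroup Γ) (hnorm : ∀ n, (Γc n).Normal)
    (hchain : ∀ n, Γc (n + 1) ≤ Γc n) (hfi : ∀ n, (Γc n).FiniteIndex)
    (hA : Tendsto (fun n => ((Γc n).subgroupOf (G₁ ⊓ G₂)).index) atTop atTop)
    (L L₁ L₂ : ℝ)
    (hL : Tendsto (fun n => ((d (Γc n) : ℝ) - 1) / (Γc n).index) atTop (nhds L))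
    (hL₁ : Tendsto (fun n => ((d ((Γc n).subgroupOf G₁) : ℝ) - 1) /
      ((Γc n).subgroupOf G₁).index) atTop (nhds L₁))
    (hL₂ : Tendsto (fun n => ((d ((Γc n).subgroupOf G₂) : ℝ) - 1) /
      ((Γc n).subgroupOf G₂).index) atTop (nhds L₂)) :
    L ≤ L₁ + L₂ :=
  rank_gradient_amalgam_bound_general G₁ G₂ hgen Γc hnorm hfi hA L L₁ L₂ hL hL₁ hL₂
end

section
/- Let Γ be the lamplighter group C₂ ≀ ℤ and let Γₙ be the kernel of the natural surjection Γ → C_{2ⁿ} (composing the projection Γ → ℤ with ℤ → ℤ/2ⁿℤ). Then Γₙ surjects onto C₂^{2ⁿ}, hence d(Γₙ) ≥ 2ⁿ, and therefore RG(Γ,(Γₙ)) = lim (d(Γₙ)-1)/[Γ:Γₙ] ≥ 1. -/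
open Filter

/-- The shift action of `ℤ` on the base group `⊕_{i ∈ ℤ} C₂` of the lamplighter
group, as a homomorphism into the automorphism group. -/
noncomputable def lampShift : Multiplicative ℤ →* MulAut (Multiplicative (ℤ →₀ ZMod 2)) where
  toFun z := AddEquiv.toMultiplicative (Finsupp.domCongr (Equiv.addRight z.toAdd))
  map_one' := by
    ext f i
    show Finsupp.equivMapDomain _ (Multiplicative.toAdd f) i = (Multiplicative.toAdd f) i
    simp [Finsupp.equivMapDomain_apply, Equiv.Perm.one_symm, Equiv.Perm.one_apply]
  map_mul' a b := by
    ext f i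
    show Finsupp.equivMapDomain _ (Multiplicative.toAdd f) i =
      Finsupp.equivMapDomain _ (Finsupp.equivMapDomain _ (Multiplicative.toAdd f)) i
    simp [Finsupp.equivMapDomain_apply, Equiv.Perm.mul_def, Equiv.addRight_symm, sub_sub,
      add_comm, add_assoc, add_left_comm]

/-- The lamplighter group `C₂ ≀ ℤ = (⊕_{i ∈ ℤ} C₂) ⋊ ℤ`. -/
abbrev Lamplighter : Type :=
  SemidirectProduct (Multiplicative (ℤ →₀ ZMod 2)) (Multiplicative ℤ) lampShift

/-- The natural surjection `C₂ ≀ ℤ → C_{2ⁿ}`, composing the projection to `ℤ`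
with reduction mod `2ⁿ`. -/
noncomputable def lampQuot (n : ℕ) : Lamplighter →* Multiplicative (ZMod (2 ^ n)) :=
  (AddMonoidHom.toMultiplicative (Int.castAddHom (ZMod (2 ^ n)))).comp
    SemidirectProduct.rightHom

theorem finrank_le_rank_multiplicative (p : ℕ) [Fact p.Prime] (V : Type*) [AddCommGroup V]
    [Module (ZMod p) V] [Group.FG (Multiplicative V)] :
    Module.finrank (ZMod p) V ≤ Group.rank (Multiplicative V) := by
  classical
  obtain ⟨S, hS, hgen⟩ := Group.rank_spec (Multiplicative V)
  set T : Finset V := S.image Multiplicative.toAdd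
  have hspan : Submodule.span (ZMod p) (T : Set V) = ⊤ := by
    have hclosure : AddSubgroup.closure (T : Set V) = ⊤ := by
      rw [← Subgroup.toAddSubgroup'.map_top, ← hgen, Subgroup.toAddSubgroup'_closure]
      congr 1
      ext v
      simp [T]
    rw [eq_top_iff, ← Submodule.toAddSubgroup_le, Submodule.top_toAddSubgroup, ← hclosure]
    exact AddSubgroup.closure_le _ |>.mpr Submodule.subset_span
  calc Module.finrank (ZMod p) V = (T : Set V).finrank (ZMod p) := by
        rw [Set.finrank, hspan, finrank_top]
    _ ≤ T.card := finrank_span_finset_le_card T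
    _ ≤ S.card := Finset.card_image_le
    _ = Group.rank (Multiplicative V) := hS

namespace SemidirectProduct

variable {N G A : Type*} [Group N] [Group G] [Group A] {φ : G →* MulAut N}

def leftHomOfInvariant (K : Subgroup G) (ψ : N →* A) (hψ : ∀ k ∈ K, ∀ x, ψ (φ k x) = ψ x) :
    K.comap (rightHom : N ⋊[φ] G →* G) →* A where
  toFun x := ψ x.1.left
  map_one' := by simp
  map_mul' x y := by simp [hψ x.1.right x.2]

theorem leftHomOfInvariant_surjective (K : Subgroup G) {ψ : N →* A}
    (hψ : ∀ k ∈ K, ∀ x, ψ (φ k x) = ψ x) (hsurj : Function.Surjective ψ) :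
    Function.Surjective (leftHomOfInvariant K ψ hψ) := by
  intro a
  obtain ⟨x, rfl⟩ := hsurj a
  exact ⟨⟨inl x, by simp⟩, rfl⟩

end SemidirectProduct

theorem one_le_of_tendsto_sub_one_div_two_pow {u : ℕ → ℕ} (hu : ∀ n, 2 ^ n ≤ u n) {L : ℝ}
    (hL : Tendsto (fun n => ((u n : ℝ) - 1) / 2 ^ n) atTop (nhds L)) : 1 ≤ L := by
  have hlim : Tendsto (fun n : ℕ => 1 - ((1 : ℝ) / 2) ^ n) atTop (nhds 1) := by
    simpa using tendsto_const_nhds.sub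
      (tendsto_pow_atTop_nhds_zero_of_lt_one (by norm_num : (0 : ℝ) ≤ 1 / 2) (by norm_num))
  refine le_of_tendsto_of_tendsto' hlim hL fun n => ?_
  have hun : (2 : ℝ) ^ n ≤ u n := by exact_mod_cast hu n
  rw [le_div_iff₀ (by positivity), one_div, inv_pow, sub_mul, inv_mul_cancel₀ (by positivity),
    one_mul]
  linarith

theorem lampQuot_surjective (n : ℕ) : Function.Surjective (lampQuot n) :=
  (ZMod.intCast_surjective (n := 2 ^ n)).comp
    (SemidirectProduct.rightHom_surjective (φ := lampShift))

theorem index_ker_lampQuot (n : ℕ) : (lampQuot n).ker.index = 2 ^ n := by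
  rw [Subgroup.index_ker, MonoidHom.range_eq_top.mpr (lampQuot_surjective n), Subgroup.card_top,
    Nat.card_congr Multiplicative.toAdd, Nat.card_zmod]

open SemidirectProduct Multiplicative in
theorem closure_lamp_mover_eq_top :
    Subgroup.closure ({inl (ofAdd (Finsupp.single 0 1)), inr (ofAdd 1)} : Set Lamplighter) = ⊤ := by
  set H := Subgroup.closure ({inl (ofAdd (Finsupp.single 0 1)), inr (ofAdd 1)} : Set Lamplighter)
  have hlamp : inl (ofAdd (Finsupp.single 0 1)) ∈ H := Subgroup.subset_closure (by simp)
  have hinr (z : Multiplicative ℤ) : inr z ∈ H := by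
    have hpow : inr z = (inr (ofAdd 1) : Lamplighter) ^ z.toAdd := by
      rw [← map_zpow, ← ofAdd_zsmul, smul_eq_mul, mul_one, ofAdd_toAdd]
    exact hpow ▸ zpow_mem (Subgroup.subset_closure (by simp)) _
  have hsingle (i : ℤ) (b : ZMod 2) : inl (ofAdd (Finsupp.single i b)) ∈ H := by
    rcases (by decide : ∀ c : ZMod 2, c = 0 ∨ c = 1) b with rfl | rfl
    · rw [Finsupp.single_zero, ofAdd_zero, map_one]
      exact H.one_mem
    · have hshift :
          lampShift (ofAdd i) (ofAdd (Finsupp.single 0 1)) = ofAdd (Finsupp.single i 1) := by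
        show ofAdd (Finsupp.equivMapDomain _ _) = _
        simp
      have hconj := mul_mem (mul_mem (hinr (ofAdd i)) hlamp) (hinr (ofAdd i)⁻¹)
      rwa [← inl_aut, hshift] at hconj
  have hinl (f : ℤ →₀ ZMod 2) : inl (ofAdd f) ∈ H := by
    induction f using Finsupp.induction with
    | zero => rw [ofAdd_zero, map_one]; exact H.one_mem
    | single_add i b g _ _ ih =>
      rw [ofAdd_add, map_mul]
      exact mul_mem (hsingle i b) ih
  refine eq_top_iff.mpr fun x _ => ?_
  rw [← inl_left_mul_inr_right x]
  exact mul_mem (hinl x.left.toAdd) (hinr x.right)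

instance : Group.FG Lamplighter :=
  Group.fg_iff.mpr ⟨_, closure_lamp_mover_eq_top, Set.toFinite _⟩

instance (n : ℕ) : (lampQuot n).ker.FiniteIndex :=
  ⟨by rw [index_ker_lampQuot]; positivity⟩

noncomputable def lampFold (n : ℕ) :
    Multiplicative (ℤ →₀ ZMod 2) →* Multiplicative (Fin (2 ^ n) → ZMod 2) :=
  AddMonoidHom.toMultiplicative <| Finsupp.coeFnAddHom.comp <|
    Finsupp.mapDomain.addMonoidHom fun j : ℤ => (ZMod.finEquiv (2 ^ n)).symm j

theorem lampFold_lampShift (n : ℕ) :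
    ∀ k ∈ (AddMonoidHom.toMultiplicative (Int.castAddHom (ZMod (2 ^ n)))).ker,
      ∀ f, lampFold n (lampShift k f) = lampFold n f := by
  intro k hk f
  have hres : (fun j : ℤ => (ZMod.finEquiv (2 ^ n)).symm j) ∘ Equiv.addRight k.toAdd =
      fun j : ℤ => (ZMod.finEquiv (2 ^ n)).symm j := by
    funext j
    have : ((k.toAdd : ℤ) : ZMod (2 ^ n)) = 0 := congrArg Multiplicative.toAdd hk
    simp [this]
  show ⇑(Finsupp.mapDomain _ (Finsupp.equivMapDomain _ f.toAdd)) = ⇑(Finsupp.mapDomain _ f.toAdd)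
  rw [Finsupp.equivMapDomain_eq_mapDomain, ← Finsupp.mapDomain_comp, hres]

theorem lampFold_surjective (n : ℕ) : Function.Surjective (lampFold n) :=
  Finsupp.equivFunOnFinite.surjective.comp <| Finsupp.mapDomain_surjective <|
    (ZMod.finEquiv (2 ^ n)).symm.surjective.comp ZMod.intCast_surjective

theorem exists_surjective_lampQuot_ker (n : ℕ) :
    ∃ f : (lampQuot n).ker →* Multiplicative (Fin (2 ^ n) → ZMod 2), Function.Surjective f :=
  ⟨_, SemidirectProduct.leftHomOfInvariant_surjective _ (lampFold_lampShift n)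
    (lampFold_surjective n)⟩

/-- For the lamplighter group `Γ = C₂ ≀ ℤ` and the chain `Γₙ = ker(Γ → C_{2ⁿ})`,
each `Γₙ` surjects onto `C₂^{2ⁿ}`, hence `d(Γₙ) ≥ 2ⁿ`, and the rank gradient of the
chain is at least `1`. -/
theorem lamplighter_rank_gradient
    (Γc : ℕ → Subgroup Lamplighter) (hΓc : ∀ n, Γc n = (lampQuot n).ker) :
    (∀ n, ∃ f : (Γc n) →* Multiplicative (Fin (2 ^ n) → ZMod 2), Function.Surjective f) ∧
    (∀ n, 2 ^ n ≤ d (Γc n)) ∧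
    (∀ L : ℝ, Tendsto (fun n => ((d (Γc n) : ℝ) - 1) / (Γc n).index) atTop (nhds L) →
      1 ≤ L) := by
  obtain rfl : Γc = fun n => (lampQuot n).ker := funext hΓc
  have hd (n : ℕ) : 2 ^ n ≤ d (lampQuot n).ker := by
    obtain ⟨f, hf⟩ := exists_surjective_lampQuot_ker n
    calc 2 ^ n = Module.finrank (ZMod 2) (Fin (2 ^ n) → ZMod 2) :=
          (Module.finrank_fin_fun _).symm
      _ ≤ Group.rank (Multiplicative (Fin (2 ^ n) → ZMod 2)) :=
          finrank_le_rank_multiplicative 2 _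
      _ ≤ Group.rank (lampQuot n).ker := Group.rank_le_of_surjective f hf
      _ = d (lampQuot n).ker := (d_eq_rank _).symm
  refine ⟨exists_surjective_lampQuot_ker, hd, fun L hL => ?_⟩
  simp only [index_ker_lampQuot, Nat.cast_pow, Nat.cast_ofNat] at hL
  exact one_le_of_tendsto_sub_one_div_two_pow hd hL
end

section
/- Let Γ be an infinite group that is boundedly generated, i.e., Γ = ⟨g₁⟩·⟨g₂⟩···⟨g_t⟩ for some g₁,…,g_t ∈ Γ, and let (Γᵢ) be a normal chain in Γ with trivial intersection. Let Kᵢ = Γᵢ'Γᵢ² and Hᵢ = Γ/Kᵢ, and let rᵢ = dim_{𝔽₂}(Γᵢ/Kᵢ). Then rᵢ ≤ t + (t-1)·log₂[Γ : Γᵢ]. -/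
/-!
Write `Kᵢ = Γᵢ'Γᵢ²`, viewed inside `Γ`. It is characteristic in `Γᵢ`, hence normal in `Γ`, and
`[Γ : Kᵢ] = 2^rᵢ · [Γ : Γᵢ]`. Every `x ∈ Γ` has `x^[Γ : Γᵢ] ∈ Γᵢ`, so `x^(2[Γ : Γᵢ]) ∈ Kᵢ`: the
quotient `Γ/Kᵢ` has exponent dividing `m = 2[Γ : Γᵢ]`. It is still boundedly generated by the images
of `g₁, …, g_t`, and exponents may be taken modulo `m`, so `|Γ/Kᵢ| ≤ m^t`. Taking `log₂` of
`2^rᵢ · [Γ : Γᵢ] ≤ (2[Γ : Γᵢ])^t` gives the bound.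
-/

open scoped commutatorElement in
/-- `G'G²`: the (normal) subgroup of `G` generated by all commutators and squares,
so that `G / G'G²` is the largest elementary abelian 2-quotient of `G`. -/
def sqComm (G : Type*) [Group G] : Subgroup G :=
  Subgroup.normalClosure {x : G | (∃ a b : G, x = ⁅a, b⁆) ∨ ∃ a : G, x = a * a}

instance sqComm_normal (G : Type*) [Group G] : (sqComm G).Normal :=
  Subgroup.normalClosure_normal

open scoped commutatorElement

def IsBoundedlyGeneratedBy {G : Type*} [Group G] {t : ℕ} (g : Fin t → G) : Prop :=
  ∀ x : G, ∃ a : Fin t → ℤ, x = (List.ofFn fun i => g i ^ a i).prod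

namespace IsBoundedlyGeneratedBy

variable {G H : Type*} [Group G] [Group H] {t : ℕ} {g : Fin t → G}

theorem map (hg : IsBoundedlyGeneratedBy g) {f : G →* H} (hf : Function.Surjective f) :
    IsBoundedlyGeneratedBy fun i => f (g i) := by
  intro y
  obtain ⟨x, rfl⟩ := hf y
  obtain ⟨a, rfl⟩ := hg x
  exact ⟨a, by simp [map_list_prod, List.map_ofFn, Function.comp_def]⟩

theorem card_le_pow (hg : IsBoundedlyGeneratedBy g) {m : ℕ} (hm : m ≠ 0)
    (hexp : ∀ x : G, x ^ m = 1) : Nat.card G ≤ m ^ t := by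
  have : NeZero m := ⟨hm⟩
  have hsurj : Function.Surjective
      fun a : Fin t → ZMod m => (List.ofFn fun i => g i ^ (a i).val).prod := by
    intro x
    obtain ⟨a, rfl⟩ := hg x
    refine ⟨fun i => a i, congrArg _ (congrArg _ (funext fun i => ?_))⟩
    rw [zpow_eq_zpow_emod' (a i) (hexp (g i)), ← ZMod.val_intCast, zpow_natCast]
  calc Nat.card G ≤ Nat.card (Fin t → ZMod m) := Nat.card_le_card_of_surjective _ hsurj
    _ = m ^ t := by simp

theorem index_le_pow_of_pow_mem (hg : IsBoundedlyGeneratedBy g) {K : Subgroup G} [K.Normal]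
    {m : ℕ} (hm : m ≠ 0) (hpow : ∀ x : G, x ^ m ∈ K) : K.index ≤ m ^ t :=
  (hg.map (QuotientGroup.mk'_surjective K)).card_le_pow hm fun y => by
    obtain ⟨x, rfl⟩ := QuotientGroup.mk_surjective y
    exact (QuotientGroup.eq_one_iff _).2 (hpow x)

end IsBoundedlyGeneratedBy

section sqComm

variable {G H : Type*} [Group G] [Group H]

theorem sqComm_le_comap (f : G →* H) : sqComm G ≤ (sqComm H).comap f := by
  refine Subgroup.normalClosure_le_normal ?_
  rintro x (⟨a, b, rfl⟩ | ⟨a, rfl⟩)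
  · exact Subgroup.subset_normalClosure (Or.inl ⟨f a, f b, map_commutatorElement f a b⟩)
  · exact Subgroup.subset_normalClosure (Or.inr ⟨f a, map_mul f a a⟩)

instance sqComm_characteristic : (sqComm G).Characteristic :=
  Subgroup.characteristic_iff_le_comap.2 fun φ => sqComm_le_comap φ.toMonoidHom

theorem mul_self_mem_sqComm (a : G) : a * a ∈ sqComm G :=
  Subgroup.subset_normalClosure (Or.inr ⟨a, rfl⟩)

theorem pow_two_mul_index_mem_map_sqComm (N : Subgroup G) [N.Normal] (x : G) :
    x ^ (2 * N.index) ∈ (sqComm N).map N.subtype := by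
  let y : N := ⟨x ^ N.index, N.pow_index_mem x⟩
  exact ⟨y * y, mul_self_mem_sqComm y, by simp [y, two_mul, pow_add]⟩

end sqComm

theorem le_add_mul_logb_of_two_pow_mul_le {r t n : ℕ} (hn : n ≠ 0)
    (h : 2 ^ r * n ≤ (2 * n) ^ t) : (r : ℝ) ≤ t + ((t : ℝ) - 1) * Real.logb 2 n := by
  have hn' : (0 : ℝ) < n := by exact_mod_cast Nat.pos_of_ne_zero hn
  have hlog := Real.logb_le_logb_of_le (b := 2) one_lt_two (by positivity)
    (show (2 : ℝ) ^ r * n ≤ (2 * n) ^ t by exact_mod_cast h)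
  rw [Real.logb_mul (by positivity) hn'.ne', Real.logb_pow, Real.logb_pow,
    Real.logb_mul two_ne_zero hn'.ne', Real.logb_self_eq_one one_lt_two] at hlog
  linarith

theorem bounded_generation_rank_bound_general {Γ : Type*} [Group Γ]
    (t : ℕ) (g : Fin t → Γ)
    (hbg : ∀ x : Γ, ∃ a : Fin t → ℤ, x = (List.ofFn fun i => g i ^ a i).prod)
    (Γc : ℕ → Subgroup Γ) (hnorm : ∀ i, (Γc i).Normal)
    (hfi : ∀ i, (Γc i).FiniteIndex)
    (r : ℕ → ℕ)
    (hr : ∀ i, Nonempty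
      (((Γc i) ⧸ sqComm (Γc i)) ≃* Multiplicative (Fin (r i) → ZMod 2))) :
    ∀ i, (r i : ℝ) ≤ t + ((t : ℝ) - 1) * Real.logb 2 ((Γc i).index) := by
  intro i
  have := hnorm i
  have hn : (Γc i).index ≠ 0 := (hfi i).index_ne_zero
  obtain ⟨e⟩ := hr i
  have hrank : (sqComm (Γc i)).index = 2 ^ r i := by
    rw [Subgroup.index_eq_card, Nat.card_congr e.toEquiv]
    simp
  have hbound := IsBoundedlyGeneratedBy.index_le_pow_of_pow_mem hbg (by omega)
    (pow_two_mul_index_mem_map_sqComm (Γc i))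
  rw [Subgroup.index_map_subtype, hrank] at hbound
  exact le_add_mul_logb_of_two_pow_mul_le hn hbound

/-- Let `Γ` be an infinite boundedly generated group, `Γ = ⟨g₁⟩⋯⟨g_t⟩`, and `(Γᵢ)` a
normal chain with trivial intersection. If `Γᵢ/Γᵢ'Γᵢ²` is elementary abelian of rank
`rᵢ`, then `rᵢ ≤ t + (t-1)·log₂ [Γ : Γᵢ]`. -/
theorem bounded_generation_rank_bound {Γ : Type*} [Group Γ] [Infinite Γ]
    (t : ℕ) (g : Fin t → Γ)
    (hbg : ∀ x : Γ, ∃ a : Fin t → ℤ, x = (List.ofFn fun i => g i ^ a i).prod)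
    (Γc : ℕ → Subgroup Γ) (hnorm : ∀ i, (Γc i).Normal)
    (hchain : ∀ i, Γc (i + 1) ≤ Γc i) (hfi : ∀ i, (Γc i).FiniteIndex)
    (hint : (⨅ i, Γc i) = ⊥)
    (r : ℕ → ℕ)
    (hr : ∀ i, Nonempty
      (((Γc i) ⧸ sqComm (Γc i)) ≃* Multiplicative (Fin (r i) → ZMod 2))) :
    ∀ i, (r i : ℝ) ≤ t + ((t : ℝ) - 1) * Real.logb 2 ((Γc i).index) :=
  bounded_generation_rank_bound_general t g hbg Γc hnorm hfi r hr
end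

section
/- Let Γ be a finitely generated residually finite group and (Γₙ) a chain of finite index subgroups with trivial intersection. If the sequence rₙ = (d(Γₙ)-1)/[Γ : Γₙ] is eventually constant, then Γ is virtually free. In fact, if rₙ = d(Γ) - 1 for all n, then Γ is free. -/
open Subgroup

private lemma d_le {G : Type*} [Group G] (S : Finset G)
    (h : Subgroup.closure (S : Set G) = ⊤) : d G ≤ S.card :=
  Nat.sInf_le ⟨S, rfl, h⟩

private lemma d_spec (G : Type*) [Group G] [hG : Group.FG G] :
    ∃ S : Finset G, S.card = d G ∧ Subgroup.closure (S : Set G) = ⊤ := by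
  have hne : {n | ∃ S : Finset G, S.card = n ∧ Subgroup.closure (S : Set G) = ⊤}.Nonempty := by
    obtain ⟨n, S, h1, h2⟩ := Group.fg_iff'.mp hG
    exact ⟨n, S, h1, h2⟩
  exact Nat.sInf_mem hne

private lemma d_congr_aux {G' H' : Type*} [Group G'] [Group H'] (e' : G' ≃* H') (n : ℕ)
    (h : ∃ S : Finset G', S.card = n ∧ Subgroup.closure (S : Set G') = ⊤) :
    ∃ S : Finset H', S.card = n ∧ Subgroup.closure (S : Set H') = ⊤ := by
  obtain ⟨S, hcard, hcl⟩ := h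
  classical
  refine ⟨S.image e', ?_, ?_⟩
  · rw [Finset.card_image_of_injective _ e'.injective, hcard]
  · rw [Finset.coe_image]
    have : (e' : G' → H') '' ↑S = ((e' : G' →* H') '' ↑S) := rfl
    rw [this, ← MonoidHom.map_closure, hcl]
    exact Subgroup.map_top_of_surjective _ e'.surjective

private lemma d_congr {G H : Type*} [Group G] [Group H] (e : G ≃* H) : d G = d H := by
  unfold d
  congr 1
  ext n
  simp only [Set.mem_setOf_eq]
  constructor
  · exact d_congr_aux e n
  · exact d_congr_aux e.symm n

private lemma d_le_of_finset_closure {G : Type*} [Group G] {H : Subgroup G} {T : Finset G}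
    (hTH : ∀ x ∈ T, x ∈ H) (hT : Subgroup.closure (T : Set G) = H) : d H ≤ T.card := by
  classical
  set T' : Finset H := T.attach.image (fun x => (⟨x.1, hTH x.1 x.2⟩ : H)) with hT'
  have hcl : Subgroup.closure (T' : Set ↥H) = ⊤ := by
    rw [eq_top_iff]
    rintro ⟨x, hx⟩ -
    have hx' : x ∈ Subgroup.closure (T : Set G) := hT ▸ hx
    refine Subgroup.closure_induction
      (p := fun g _ => ∀ (hgH : g ∈ H), (⟨g, hgH⟩ : H) ∈ Subgroup.closure (T' : Set ↥H))
      ?_ ?_ ?_ ?_ hx' hx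
    · intro y hy hyH
      refine subset_closure ?_
      simp only [hT', Finset.coe_image, Set.mem_image, Finset.mem_coe, Finset.mem_attach]
      exact ⟨⟨y, hy⟩, trivial, rfl⟩
    · intro h1
      exact Subgroup.one_mem _
    · intro x y hxc hyc hx1 hy1 hmem
      have hxH : x ∈ H := hT ▸ hxc
      have hyH : y ∈ H := hT ▸ hyc
      exact Subgroup.mul_mem _ (hx1 hxH) (hy1 hyH)
    · intro x hxc hx1 hmem
      have hxH : x ∈ H := hT ▸ hxc
      exact Subgroup.inv_mem _ (hx1 hxH)
  refine (d_le T' hcl).trans ?_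
  exact Finset.card_image_le.trans (by simp)


private abbrev RQ {G : Type*} [Group G] (H : Subgroup G) : Type _ :=
  Quotient (QuotientGroup.rightRel H)

private def pr {G : Type*} [Group G] (H : Subgroup G) (g : G) : RQ H :=
  Quotient.mk (QuotientGroup.rightRel H) g

private lemma pr_eq_iff {G : Type*} [Group G] (H : Subgroup G) {x y : G} :
    pr H x = pr H y ↔ y * x⁻¹ ∈ H := by
  rw [pr, pr, Quotient.eq]
  exact QuotientGroup.rightRel_apply

private lemma pr_mul_right {G : Type*} [Group G] {H : Subgroup G} {x y : G}
    (h : pr H x = pr H y) (z : G) : pr H (x * z) = pr H (y * z) := by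
  rw [pr_eq_iff] at h ⊢
  have : y * z * (x * z)⁻¹ = y * x⁻¹ := by group
  rw [this]
  exact h

private lemma pr_out {G : Type*} [Group G] (H : Subgroup G) (q : RQ H) :
    pr H q.out = q := Quotient.out_eq q

private def SchInv {G : Type*} [Group G] (H : Subgroup G) (S : Finset G)
    (V : Finset (RQ H)) (rep : RQ H → G) (inj : RQ H → RQ H × ↥S) : Prop :=
  (∀ q, pr H (rep q) = q) ∧ (pr H 1 ∈ V) ∧ (rep (pr H 1) = 1) ∧
  (∀ q ∈ V, (inj q).1 ∈ V ∧ pr H (rep (inj q).1 * ((inj q).2 : G)) ∈ V ∧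
      rep (inj q).1 * ((inj q).2 : G) = rep (pr H (rep (inj q).1 * ((inj q).2 : G)))) ∧
  (∀ q ∈ V, ∀ q' ∈ V, inj q = inj q' → q = q')

private lemma base_inv {G : Type*} [Group G] (H : Subgroup G) (S : Finset G)
    (L : ℕ) (hL : 1 ≤ L) (a : ℕ → ↥S) (b : ℕ → Bool)
    (hred : ∀ i, i + 1 < L → ¬(a i = a (i + 1) ∧ b i = !b (i + 1)))
    (p : ℕ → G) (hp0 : p 0 = 1) (hpL : p L = 1)
    (hstep : ∀ i, i < L → p (i + 1) = p i * (if b i then (a i : G) else (a i : G)⁻¹))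
    (hcos : ∀ i j, i < L → j < L → pr H (p i) = pr H (p j) → i = j) :
    ∃ (V : Finset (RQ H)) (rep : RQ H → G) (inj : RQ H → RQ H × ↥S),
      SchInv H S V rep inj := by
  classical
  set σ : ℕ → ℕ := fun j => if j + 1 = L then 0 else j + 1 with hσdef
  set c : ℕ → RQ H := fun i => pr H (p i) with hcdef
  have hσlt : ∀ j, j < L → σ j < L := by
    intro j hj
    by_cases h : j + 1 = L
    · simp [hσdef, h]; omega
    · simp [hσdef, h]; omega
  have hσinj : ∀ j j', j < L → j' < L → σ j = σ j' → j = j' := by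
    intro j j' hj hj' h
    by_cases h1 : j + 1 = L <;> by_cases h2 : j' + 1 = L <;>
      simp [hσdef, h1, h2] at h <;> omega
  have hpσ : ∀ j, j < L → p (σ j) = p (j + 1) := by
    intro j hj
    by_cases h : j + 1 = L
    · simp only [hσdef, if_pos h, hp0, h, hpL]
    · simp [hσdef, h]
  set τ : ℕ → ℕ := fun k => if k = 0 then L - 1 else k - 1 with hτdef
  have hτlt : ∀ k, k < L → τ k < L := by
    intro k hk
    by_cases h : k = 0 <;> simp [hτdef, h] <;> omega
  have hστ : ∀ k, k < L → σ (τ k) = k := by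
    intro k hk
    by_cases h : k = 0
    · subst h; simp [hτdef, hσdef]; omega
    · have : τ k = k - 1 := by simp [hτdef, h]
      rw [this]
      have : k - 1 + 1 = k := by omega
      rw [hσdef]
      simp only [this]
      rw [if_neg (by omega)]
  set e : ℕ → RQ H × ↥S := fun j => if b j then (c j, a j) else (c (σ j), a j) with hedef
  set V : Finset (RQ H) := (Finset.range L).image c with hVdef
  have hmemV : ∀ q, q ∈ V ↔ ∃ i, i < L ∧ c i = q := by
    intro q
    simp [hVdef, Finset.mem_image]
  set rep : RQ H → G :=
    fun q => if h : ∃ i, i < L ∧ c i = q then p h.choose else q.out with hrepdef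
  have hrep_c : ∀ i, i < L → rep (c i) = p i := by
    intro i hi
    have h : ∃ i', i' < L ∧ c i' = c i := ⟨i, hi, rfl⟩
    have := h.choose_spec
    have heq : h.choose = i := hcos _ _ this.1 hi this.2
    rw [hrepdef]
    simp only [dif_pos h, heq]
  have hsect : ∀ q, pr H (rep q) = q := by
    intro q
    rw [hrepdef]
    by_cases h : ∃ i, i < L ∧ c i = q
    · simp only [dif_pos h]
      exact h.choose_spec.2
    · simp only [dif_neg h]
      exact pr_out H q
  set inj : RQ H → RQ H × ↥S :=
    fun q => if h : ∃ i, i < L ∧ c i = q then e (τ h.choose) else (q, a 0) with hinjdef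
  have hinj_c : ∀ k, k < L → inj (c k) = e (τ k) := by
    intro k hk
    have h : ∃ i', i' < L ∧ c i' = c k := ⟨k, hk, rfl⟩
    have := h.choose_spec
    have heq : h.choose = k := hcos _ _ this.1 hk this.2
    rw [hinjdef]
    simp only [dif_pos h, heq]
  -- key edge properties
  have hE : ∀ j, j < L → (e j).1 ∈ V ∧ pr H (rep (e j).1 * ((e j).2 : G)) ∈ V ∧
      rep (e j).1 * ((e j).2 : G) = rep (pr H (rep (e j).1 * ((e j).2 : G))) := by
    intro j hj
    by_cases hb : b j
    · have he : e j = (c j, a j) := by rw [hedef]; simp [hb]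
      rw [he]
      have h1 : rep (c j) * (a j : G) = p (σ j) := by
        rw [hrep_c j hj, hpσ j hj, hstep j hj, if_pos hb]
      have h2 : pr H (p (σ j)) = c (σ j) := rfl
      refine ⟨(hmemV _).mpr ⟨j, hj, rfl⟩, ?_, ?_⟩
      · rw [h1, h2]; exact (hmemV _).mpr ⟨σ j, hσlt j hj, rfl⟩
      · rw [h1, h2, hrep_c _ (hσlt j hj)]
    · have he : e j = (c (σ j), a j) := by rw [hedef]; simp [hb]
      rw [he]
      have h1 : rep (c (σ j)) * (a j : G) = p j := by
        rw [hrep_c _ (hσlt j hj), hpσ j hj, hstep j hj, if_neg hb]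
        group
      have h2 : pr H (p j) = c j := rfl
      refine ⟨(hmemV _).mpr ⟨σ j, hσlt j hj, rfl⟩, ?_, ?_⟩
      · rw [h1, h2]; exact (hmemV _).mpr ⟨j, hj, rfl⟩
      · rw [h1, h2, hrep_c _ hj]
  -- the wrap-around helper for injectivity
  have hW : ∀ x y, x < L → y < L → y = σ x → b x = false → b y = true → a x = a y → False := by
    intro x y hx hy hyx hbx hby ha
    by_cases hxe : x + 1 = L
    · -- y = 0
      have hy0 : y = 0 := by rw [hyx, hσdef]; simp [hxe]
      by_cases hx0 : x = 0
      · rw [hx0] at hbx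
        rw [hy0] at hby
        simp [hbx] at hby
      · -- x ≥ 1
        have h1 : p 1 = (a 0 : G) := by
          have h' := hstep 0 (by omega)
          rw [hy0] at hby
          rw [h', hp0, if_pos hby, one_mul]
        have h2 : p x = (a x : G) := by
          have h' := hstep x (by omega)
          rw [hxe, hpL, if_neg (by simp [hbx])] at h'
          have h'' := h'.symm
          rwa [mul_inv_eq_one] at h''
        have h3 : p 1 = p x := by
          have hax : a 0 = a x := by rw [ha, hy0]
          rw [h1, h2]
          exact congrArg _ hax
        have hx1 : x = 1 := (hcos 1 x (by omega) (by omega) (by rw [h3])).symm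
        subst hy0
        subst hx1
        have := hred 0 (by omega)
        apply this
        constructor
        · simpa using ha.symm
        · simp [hby, hbx]
    · -- y = x + 1, adjacent
      have hy1 : y = x + 1 := by rw [hyx, hσdef]; simp [hxe]
      have := hred x (by omega)
      apply this
      refine ⟨by rw [← hy1]; exact ha, ?_⟩
      rw [← hy1, hby, hbx]
      rfl
  have hEinj : ∀ j j', j < L → j' < L → e j = e j' → j = j' := by
    intro j j' hj hj' he
    by_contra hne
    by_cases hbj : b j <;> by_cases hbj' : b j'
    · rw [hedef] at he
      simp only [if_pos hbj, if_pos hbj', Prod.mk.injEq] at he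
      exact hne (hcos _ _ hj hj' he.1)
    · rw [hedef] at he
      simp only [if_pos hbj, if_neg hbj', Prod.mk.injEq] at he
      have h1 : j = σ j' := hcos _ _ hj (hσlt _ hj') he.1
      exact hW j' j hj' hj h1 (by simp [hbj']) (by simp [hbj]) he.2.symm
    · rw [hedef] at he
      simp only [if_neg hbj, if_pos hbj', Prod.mk.injEq] at he
      have h1 : σ j = j' := hcos _ _ (hσlt _ hj) hj' he.1
      exact hW j j' hj hj' h1.symm (by simp [hbj]) (by simp [hbj']) he.2
    · rw [hedef] at he
      simp only [if_neg hbj, if_neg hbj', Prod.mk.injEq] at he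
      exact hne (hσinj _ _ hj hj' (hcos _ _ (hσlt _ hj) (hσlt _ hj') he.1))
  refine ⟨V, rep, inj, hsect, ?_, ?_, ?_, ?_⟩
  · rw [show (1 : G) = p 0 from hp0.symm]
    exact (hmemV _).mpr ⟨0, by omega, rfl⟩
  · rw [show pr H (1 : G) = c 0 from by rw [hcdef]; simp [hp0], hrep_c 0 (by omega), hp0]
  · intro q hq
    obtain ⟨k, hk, rfl⟩ := (hmemV q).mp hq
    rw [hinj_c k hk]
    exact hE (τ k) (hτlt k hk)
  · intro q hq q' hq' heq
    obtain ⟨k, hk, rfl⟩ := (hmemV q).mp hq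
    obtain ⟨k', hk', rfl⟩ := (hmemV q').mp hq'
    rw [hinj_c k hk, hinj_c k' hk'] at heq
    have : τ k = τ k' := hEinj _ _ (hτlt k hk) (hτlt k' hk') heq
    rw [hcdef]
    rw [show k = σ (τ k) from (hστ k hk).symm, show k' = σ (τ k') from (hστ k' hk').symm, this]

private lemma grow {G : Type*} [Group G] (H : Subgroup G) (S : Finset G)
    (hS : Subgroup.closure (S : Set G) = ⊤) [Fintype (RQ H)] :
    ∀ (k : ℕ) (V : Finset (RQ H)) (rep : RQ H → G) (inj : RQ H → RQ H × ↥S),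
      V.card + k = Fintype.card (RQ H) → SchInv H S V rep inj →
      ∃ (rep' : RQ H → G) (inj' : RQ H → RQ H × ↥S),
        SchInv H S Finset.univ rep' inj' := by
  classical
  intro k
  induction k with
  | zero =>
    intro V rep inj hcard hInv
    have : V = Finset.univ := Finset.eq_univ_of_card V (by omega)
    exact ⟨rep, inj, this ▸ hInv⟩
  | succ k ih =>
    intro V rep inj hcard hInv
    obtain ⟨hsect, h1V, hrep1, hprop, hinj⟩ := hInv
    -- find a crossing edge
    have hcross : ∃ (x : RQ H) (s : ↥S) (bb : Bool),
        x ∈ V ∧ pr H (rep x * (if bb then (s : G) else (s : G)⁻¹)) ∉ V := by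
      by_contra hc
      push_neg at hc
      have hall : ∀ g : G, pr H g ∈ V := by
        intro g
        have hg : g ∈ Subgroup.closure (S : Set G) := hS ▸ Subgroup.mem_top g
        refine Subgroup.closure_induction_right (p := fun x _ => pr H x ∈ V) h1V ?_ ?_ hg
        · intro x _ y hy hx
          have : pr H (x * y) = pr H (rep (pr H x) * y) :=
            pr_mul_right (hsect (pr H x)).symm y
          rw [this]
          have := hc (pr H x) ⟨y, hy⟩ true hx
          simpa using this
        · intro x _ y hy hx
          have : pr H (x * y⁻¹) = pr H (rep (pr H x) * y⁻¹) :=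
            pr_mul_right (hsect (pr H x)).symm y⁻¹
          rw [this]
          have := hc (pr H x) ⟨y, hy⟩ false hx
          simpa using this
      -- V ≠ univ
      have hne : V ≠ Finset.univ := by
        intro h
        rw [h, Finset.card_univ] at hcard
        omega
      obtain ⟨q, hq⟩ : ∃ q : RQ H, q ∉ V := by
        by_contra hq
        push_neg at hq
        exact hne (Finset.eq_univ_iff_forall.mpr hq)
      exact hq (by rw [← pr_out H q]; exact hall _)
    obtain ⟨x, s, bb, hxV, htgt⟩ := hcross
    set r₀ : G := rep x * (if bb then (s : G) else (s : G)⁻¹) with hr₀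
    set q₀ : RQ H := pr H r₀ with hq₀
    have hq₀V : q₀ ∉ V := htgt
    set rep' : RQ H → G := Function.update rep q₀ r₀ with hrep'
    set inj' : RQ H → RQ H × ↥S :=
      Function.update inj q₀ (if bb then (x, s) else (q₀, s)) with hinj'
    have hxne : x ≠ q₀ := fun h => hq₀V (h ▸ hxV)
    have hrep'V : ∀ q, q ≠ q₀ → rep' q = rep q := by
      intro q hq; rw [hrep']; exact Function.update_of_ne hq _ _
    have hrep'q₀ : rep' q₀ = r₀ := by rw [hrep']; exact Function.update_self _ _ _
    have hinj'V : ∀ q, q ≠ q₀ → inj' q = inj q := by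
      intro q hq; rw [hinj']; exact Function.update_of_ne hq _ _
    have hinj'q₀ : inj' q₀ = (if bb then (x, s) else (q₀, s)) := by
      rw [hinj']; exact Function.update_self _ _ _
    have hsect' : ∀ q, pr H (rep' q) = q := by
      intro q
      by_cases h : q = q₀
      · rw [h, hrep'q₀, ← hq₀]
      · rw [hrep'V q h]; exact hsect q
    refine ih (insert q₀ V) rep' inj' ?_ ⟨hsect', Finset.mem_insert_of_mem h1V, ?_, ?_, ?_⟩
    · rw [Finset.card_insert_of_notMem hq₀V]; omega
    · have h1q : pr H (1 : G) ≠ q₀ := fun h => hq₀V (h ▸ h1V)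
      rw [hrep'V _ h1q]; exact hrep1
    · intro q hq
      rcases Finset.mem_insert.mp hq with h | h
      · -- new vertex
        subst h
        rw [hinj'q₀]
        by_cases hb : bb
        · simp only [if_pos hb]
          have e1 : rep' x * (s : G) = r₀ := by rw [hrep'V x hxne, hr₀, if_pos hb]
          refine ⟨Finset.mem_insert_of_mem hxV, ?_, ?_⟩
          · rw [e1, ← hq₀]; exact Finset.mem_insert_self _ _
          · rw [e1, ← hq₀, hrep'q₀]
        · simp only [if_neg hb]
          have e1 : rep' q₀ * (s : G) = rep x := by
            rw [hrep'q₀, hr₀, if_neg hb]; group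
          refine ⟨Finset.mem_insert_self _ _, ?_, ?_⟩
          · rw [e1, hsect x]; exact Finset.mem_insert_of_mem hxV
          · rw [e1, hsect x, hrep'V x hxne]
      · -- old vertex
        have hqne : q ≠ q₀ := fun hh => hq₀V (hh ▸ h)
        rw [hinj'V q hqne]
        obtain ⟨ha1, ha2, ha3⟩ := hprop q h
        have hne1 : (inj q).1 ≠ q₀ := fun hh => hq₀V (hh ▸ ha1)
        have hne2 : pr H (rep (inj q).1 * ((inj q).2 : G)) ≠ q₀ := fun hh => hq₀V (hh ▸ ha2)
        rw [hrep'V _ hne1]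
        exact ⟨Finset.mem_insert_of_mem ha1, Finset.mem_insert_of_mem ha2,
          by rw [hrep'V _ hne2]; exact ha3⟩
    · intro q hq q' hq' heq
      rcases Finset.mem_insert.mp hq with h | h <;> rcases Finset.mem_insert.mp hq' with h' | h'
      · rw [h, h']
      · -- q = q₀ new, q' old
        subst h
        have hq'ne : q' ≠ q₀ := fun hh => hq₀V (hh ▸ h')
        rw [hinj'q₀, hinj'V q' hq'ne] at heq
        exfalso
        obtain ⟨ha1, ha2, -⟩ := hprop q' h'
        by_cases hb : bb
        · rw [if_pos hb] at heq
          apply htgt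
          obtain ⟨e1, e2⟩ : x = (inj q').1 ∧ s = (inj q').2 := by
            rw [← heq]; exact ⟨rfl, rfl⟩
          have h5 : q₀ = pr H (rep (inj q').1 * ((inj q').2 : G)) := by
            rw [hq₀, hr₀, if_pos hb, e1, e2]
          rw [h5]; exact ha2
        · rw [if_neg hb] at heq
          rw [← heq] at ha1
          exact hq₀V ha1
      · -- symmetric
        subst h'
        have hqne : q ≠ q₀ := fun hh => hq₀V (hh ▸ h)
        rw [hinj'q₀, hinj'V q hqne] at heq
        exfalso
        obtain ⟨ha1, ha2, -⟩ := hprop q h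
        by_cases hb : bb
        · rw [if_pos hb] at heq
          apply htgt
          obtain ⟨e1, e2⟩ : x = (inj q).1 ∧ s = (inj q).2 := by
            rw [heq]; exact ⟨rfl, rfl⟩
          have h5 : q₀ = pr H (rep (inj q).1 * ((inj q).2 : G)) := by
            rw [hq₀, hr₀, if_pos hb, e1, e2]
          rw [h5]; exact ha2
        · rw [if_neg hb] at heq
          rw [heq] at ha1
          exact hq₀V ha1
      · have hqne : q ≠ q₀ := fun hh => hq₀V (hh ▸ h)
        have hq'ne : q' ≠ q₀ := fun hh => hq₀V (hh ▸ h')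
        rw [hinj'V q hqne, hinj'V q' hq'ne] at heq
        exact hinj q h q' h' heq

private lemma core_bound {G : Type*} [Group G] (H : Subgroup G) [H.FiniteIndex]
    (S : Finset G) (hS : Subgroup.closure (S : Set G) = ⊤) [Fintype (RQ H)]
    (rep : RQ H → G) (inj : RQ H → RQ H × ↥S)
    (hInv : SchInv H S Finset.univ rep inj) :
    d ↥H + H.index ≤ H.index * S.card := by
  classical
  obtain ⟨hsect, -, hrep1, hprop, hinj⟩ := hInv
  set genG : RQ H × ↥S → G :=
    fun x => rep x.1 * (x.2 : G) * (rep (pr H (rep x.1 * (x.2 : G))))⁻¹ with hgen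
  have memH : ∀ x : RQ H × ↥S, genG x ∈ H := by
    intro x
    have h := hsect (pr H (rep x.1 * (x.2 : G)))
    rw [pr_eq_iff] at h
    exact h
  set C : Subgroup G := Subgroup.closure (Set.range genG) with hC
  have hkey : ∀ g : G, g * (rep (pr H g))⁻¹ ∈ C := by
    intro g
    have hg : g ∈ Subgroup.closure (S : Set G) := hS ▸ Subgroup.mem_top g
    refine Subgroup.closure_induction_right
      (p := fun x _ => x * (rep (pr H x))⁻¹ ∈ C) ?_ ?_ ?_ hg
    · simp only [hrep1, inv_one, mul_one]
      exact Subgroup.one_mem C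
    · intro x _ y hy hx
      have hxy : pr H (x * y) = pr H (rep (pr H x) * y) :=
        pr_mul_right (hsect (pr H x)).symm y
      have hdec : x * y * (rep (pr H (x * y)))⁻¹ =
          (x * (rep (pr H x))⁻¹) *
          (rep (pr H x) * y * (rep (pr H (rep (pr H x) * y)))⁻¹) := by
        rw [hxy]; group
      rw [hdec]
      exact Subgroup.mul_mem C hx (Subgroup.subset_closure ⟨(pr H x, ⟨y, hy⟩), rfl⟩)
    · intro x _ y hy hx
      set r := rep (pr H x) with hr
      set q' := pr H (r * y⁻¹) with hq'
      have h1 : pr H (x * y⁻¹) = q' := pr_mul_right (hsect (pr H x)).symm y⁻¹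
      have h2 : pr H (rep q' * y) = pr H x := by
        have e1 : pr H (rep q' * y) = pr H (r * y⁻¹ * y) :=
          pr_mul_right (hsect q') y
        rw [e1, inv_mul_cancel_right]
        exact hsect (pr H x)
      have hgq : genG (q', ⟨y, hy⟩) = rep q' * y * r⁻¹ := by
        rw [hgen]
        simp only
        rw [h2]
      have hdec : x * y⁻¹ * (rep (pr H (x * y⁻¹)))⁻¹ =
          (x * r⁻¹) * (rep q' * y * r⁻¹)⁻¹ := by
        rw [h1]; group
      rw [hdec]
      exact Subgroup.mul_mem C hx
        (Subgroup.inv_mem C (hgq ▸ Subgroup.subset_closure ⟨(q', ⟨y, hy⟩), rfl⟩))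
  have hCH : C = H := by
    refine le_antisymm ?_ ?_
    · rw [hC, Subgroup.closure_le]
      rintro x ⟨y, rfl⟩
      exact memH y
    · intro h hh
      have h1 : pr H h = pr H 1 := by
        rw [pr_eq_iff]
        simpa using hh
      have := hkey h
      rw [h1, hrep1, inv_one, mul_one] at this
      exact this
  -- the finset of generators
  set T : Finset G := Finset.image genG Finset.univ with hT
  have hTH : ∀ x ∈ T, x ∈ H := by
    intro x hx
    obtain ⟨y, -, rfl⟩ := Finset.mem_image.mp hx
    exact memH y
  have hTcl : Subgroup.closure (T : Set G) = H := by
    rw [hT, Finset.coe_image, Finset.coe_univ, Set.image_univ, ← hC]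
    exact hCH
  set T' : Finset G := T.erase 1 with hT'
  have hT'H : ∀ x ∈ T', x ∈ H := fun x hx => hTH x (Finset.mem_of_mem_erase hx)
  have hT'cl : Subgroup.closure (T' : Set G) = H := by
    refine le_antisymm ?_ ?_
    · rw [Subgroup.closure_le]
      intro x hx
      exact hTH x (Finset.mem_of_mem_erase hx)
    · rw [← hTcl]
      rw [Subgroup.closure_le]
      intro x hx
      by_cases h1 : x = 1
      · rw [h1]; exact Subgroup.one_mem _
      · exact Subgroup.subset_closure (Finset.mem_erase.mpr ⟨h1, hx⟩)
  have hd : d ↥H ≤ T'.card := d_le_of_finset_closure hT'H hT'cl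
  -- counting
  have hinj' : Function.Injective inj := by
    intro q q' h
    exact hinj q (Finset.mem_univ q) q' (Finset.mem_univ q') h
  set D : Finset (RQ H × ↥S) := Finset.univ \ Finset.image inj Finset.univ with hD
  have hsub : T' ⊆ Finset.image genG D := by
    intro t ht
    obtain ⟨ht1, ht2⟩ := Finset.mem_erase.mp ht
    obtain ⟨y, -, rfl⟩ := Finset.mem_image.mp ht2
    refine Finset.mem_image.mpr ⟨y, ?_, rfl⟩
    rw [hD, Finset.mem_sdiff]
    refine ⟨Finset.mem_univ y, ?_⟩
    intro hy
    obtain ⟨q, -, rfl⟩ := Finset.mem_image.mp hy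
    apply ht1
    obtain ⟨-, -, h3⟩ := hprop q (Finset.mem_univ q)
    rw [hgen]
    simp only
    rw [← h3]
    group
  have hcard1 : T'.card ≤ D.card :=
    le_trans (Finset.card_le_card hsub) Finset.card_image_le
  have hcard2 : D.card = Fintype.card (RQ H) * S.card - Fintype.card (RQ H) := by
    rw [hD, Finset.card_sdiff_of_subset (Finset.subset_univ _),
      Finset.card_image_of_injective _ hinj', Finset.card_univ, Finset.card_univ,
      Fintype.card_prod, Fintype.card_coe]
  have hQcard : Fintype.card (RQ H) = H.index := by
    rw [Subgroup.index_eq_card, ← Nat.card_eq_fintype_card]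
    exact Nat.card_congr (QuotientGroup.quotientRightRelEquivQuotientLeftRel H)
  have hSne : 1 ≤ S.card := by
    exact Finset.card_pos.mpr ⟨((inj (pr H 1)).2 : G), (inj (pr H 1)).2.2⟩
  have hle : Fintype.card (RQ H) ≤ Fintype.card (RQ H) * S.card :=
    Nat.le_mul_of_pos_right _ (by omega)
  rw [hQcard] at hcard2 hle
  omega

private lemma core {G : Type*} [Group G] (H : Subgroup G) [H.FiniteIndex]
    (S : Finset G) (hS : Subgroup.closure (S : Set G) = ⊤)
    (L : ℕ) (hL : 1 ≤ L) (a : ℕ → ↥S) (b : ℕ → Bool)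
    (hred : ∀ i, i + 1 < L → ¬(a i = a (i + 1) ∧ b i = !b (i + 1)))
    (p : ℕ → G) (hp0 : p 0 = 1) (hpL : p L = 1)
    (hstep : ∀ i, i < L → p (i + 1) = p i * (if b i then (a i : G) else (a i : G)⁻¹))
    (hcos : ∀ i j, i < L → j < L → pr H (p i) = pr H (p j) → i = j) :
    d ↥H + H.index ≤ H.index * S.card := by
  classical
  letI : Fintype (G ⧸ H) := H.fintypeQuotientOfFiniteIndex
  letI : Fintype (RQ H) :=
    Fintype.ofEquiv _ (QuotientGroup.quotientRightRelEquivQuotientLeftRel H).symm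
  obtain ⟨V, rep, inj, hInv⟩ := base_inv H S L hL a b hred p hp0 hpL hstep hcos
  have hVle : V.card ≤ Fintype.card (RQ H) := Finset.card_le_univ V
  obtain ⟨rep', inj', hInv'⟩ :=
    grow H S hS (Fintype.card (RQ H) - V.card) V rep inj (by omega) hInv
  exact core_bound H S hS rep' inj' hInv'

private lemma reduce_eq_self_of_chain {α : Type*} [DecidableEq α] :
    ∀ (l : List (α × Bool)),
      List.Chain' (fun x y : α × Bool => ¬(x.1 = y.1 ∧ x.2 = !y.2)) l →
      FreeGroup.reduce l = l
  | [], _ => rfl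
  | x :: l, h => by
    have ih := reduce_eq_self_of_chain l h.tail
    rw [FreeGroup.reduce.cons, ih]
    cases l with
    | nil => rfl
    | cons hd tl =>
      have hR := (List.isChain_cons_cons.mp h).1
      show (if x.1 = hd.1 ∧ x.2 = !hd.2 then tl else x :: hd :: tl) = x :: hd :: tl
      rw [if_neg hR]

private lemma chain_of_reduce {α : Type*} [DecidableEq α] (l : List (α × Bool))
    (h : FreeGroup.reduce l = l) :
    List.Chain' (fun x y : α × Bool => ¬(x.1 = y.1 ∧ x.2 = !y.2)) l := by
  refine List.isChain_iff_getElem.mpr ?_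
  intro i hi
  rintro ⟨h1, h2⟩
  have hilen : i < l.length := by omega
  have hi1len : i + 1 < l.length := by omega
  have h4 : l[i + 1] = (l[i].1, !l[i].2) := by
    refine Prod.ext_iff.mpr ⟨h1.symm, ?_⟩
    rw [h2, Bool.not_not]
  have e := List.take_append_drop i l
  rw [List.drop_eq_getElem_cons hilen, List.drop_eq_getElem_cons hi1len] at e
  refine FreeGroup.reduce.not (L₁ := l) (L₂ := l.take i) (L₃ := l.drop (i + 1 + 1))
    (x := l[i].1) (b := l[i].2) ?_
  rw [h, Prod.mk.eta, ← h4]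
  exact e.symm

private lemma free_of_chain {G : Type*} [Group G] [Group.FG G]
    (Γc : ℕ → Subgroup G) (hchain : ∀ n, Γc (n + 1) ≤ Γc n)
    (hfi : ∀ n, (Γc n).FiniteIndex) (hint : (⨅ n, Γc n) = ⊥)
    (heq : ∀ n, ((d (Γc n) : ℝ) - 1) / (Γc n).index = (d G : ℝ) - 1) :
    IsFreeGroup G := by
  classical
  obtain ⟨S, hScard, hScl⟩ := d_spec G
  set φ : FreeGroup ↥S →* G := FreeGroup.lift ((↑) : ↥S → G) with hφ
  have hsurj : Function.Surjective φ := by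
    rw [← MonoidHom.range_eq_top, hφ, FreeGroup.range_lift_eq_closure,
      Subtype.range_coe_subtype]
    exact hScl
  by_cases hker : ∀ w : FreeGroup ↥S, φ w = 1 → w = 1
  · -- φ is injective, so G is free
    have hinj : Function.Injective φ := by
      intro x y hxy
      have h1 : φ (x * y⁻¹) = 1 := by rw [map_mul, map_inv, hxy, mul_inv_cancel]
      have h2 := hker _ h1
      rw [mul_inv_eq_one] at h2
      exact h2
    exact IsFreeGroup.ofMulEquiv (MulEquiv.ofBijective φ ⟨hinj, hsurj⟩)
  · exfalso
    push_neg at hker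
    obtain ⟨w₀, hw₀1, hw₀2⟩ := hker
    set K : Set ℕ := {k | ∃ v : FreeGroup ↥S, φ v = 1 ∧ v ≠ 1 ∧ v.toWord.length = k} with hK
    have hKne : K.Nonempty := ⟨_, w₀, hw₀1, hw₀2, rfl⟩
    obtain ⟨w, hwφ, hwne, hwlen⟩ := Nat.sInf_mem hKne
    set L := sInf K with hLdef
    have hmin : ∀ v : FreeGroup ↥S, φ v = 1 → v ≠ 1 → L ≤ v.toWord.length :=
      fun v h1 h2 => Nat.sInf_le ⟨v, h1, h2, rfl⟩
    set ℓ : List (↥S × Bool) := w.toWord with hℓ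
    have hL1 : 1 ≤ L := by
      rcases Nat.eq_zero_or_pos L with h | h
      · exfalso
        apply hwne
        rw [← FreeGroup.toWord_eq_nil_iff, ← hℓ, ← List.length_eq_zero_iff]
        omega
      · exact h
    have hℓlen : ℓ.length = L := hwlen
    set dflt : ↥S × Bool := ℓ.get ⟨0, by rw [hℓlen]; omega⟩ with hdflt
    set a : ℕ → ↥S := fun i => (ℓ.getD i dflt).1 with ha
    set b : ℕ → Bool := fun i => (ℓ.getD i dflt).2 with hb
    have hadef : ∀ i, a i = (ℓ.getD i dflt).1 := fun _ => rfl
    have hbdef : ∀ i, b i = (ℓ.getD i dflt).2 := fun _ => rfl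
    have hgetD : ∀ i, (hi : i < L) → ℓ.getD i dflt = ℓ[i]'(by rw [hℓlen]; omega) := by
      intro i hi
      exact List.getD_eq_getElem ℓ dflt (by rw [hℓlen]; omega)
    set p : ℕ → G :=
      fun i => (((ℓ.take i).map fun x => if x.2 then (x.1 : G) else (x.1 : G)⁻¹)).prod with hp
    have hpdef : ∀ i,
        p i = (((ℓ.take i).map fun x => if x.2 then (x.1 : G) else (x.1 : G)⁻¹)).prod :=
      fun _ => rfl
    have hφmk : ∀ l' : List (↥S × Bool),
        φ (FreeGroup.mk l') = (l'.map fun x => if x.2 then (x.1 : G) else (x.1 : G)⁻¹).prod := by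
      intro l'
      rw [hφ, FreeGroup.lift_mk]
      congr 1
      apply List.map_congr_left
      intro x _
      rw [Bool.cond_eq_ite]
    have hp0 : p 0 = 1 := by simp [hp]
    have hpL : p L = 1 := by
      rw [hpdef]
      have h5 : ℓ.take L = ℓ := by rw [← hℓlen]; exact List.take_length
      rw [h5, ← hφmk, hℓ, FreeGroup.mk_toWord]
      exact hwφ
    have hstep : ∀ i, i < L → p (i + 1) = p i * (if b i then (a i : G) else (a i : G)⁻¹) := by
      intro i hi
      have hi' : i < ℓ.length := by rw [hℓlen]; omega
      rw [hpdef, hpdef]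
      rw [List.take_succ, List.map_append, List.prod_append]
      congr 1
      have h5 : ℓ[i]? = some (ℓ[i]'hi') := List.getElem?_eq_getElem hi'
      rw [h5]
      simp only [Option.toList_some, List.map_cons, List.map_nil, List.prod_cons, List.prod_nil,
        mul_one]
      rw [hadef, hbdef]
      rw [hgetD i hi]
    have hchainR : List.Chain' (fun x y : ↥S × Bool => ¬(x.1 = y.1 ∧ x.2 = !y.2)) ℓ :=
      chain_of_reduce ℓ (FreeGroup.reduce_toWord w)
    have hred : ∀ i, i + 1 < L → ¬(a i = a (i + 1) ∧ b i = !b (i + 1)) := by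
      intro i hi
      have h5 := List.isChain_iff_getElem.mp hchainR i (by rw [hℓlen]; omega)
      rw [hadef, hbdef, hadef, hbdef]
      rw [hgetD i (by omega), hgetD (i + 1) (by omega)]
      exact h5
    -- distinctness of the prefix products
    have hdist : ∀ i j, i < j → j < L → p i ≠ p j := by
      intro i j hij hj hpeq
      set sl : List (↥S × Bool) := (ℓ.take j).drop i with hsl
      have hsl_len : sl.length = j - i := by
        rw [hsl, List.length_drop, List.length_take]
        omega
      have htk : ℓ.take i = (ℓ.take j).take i := by
        rw [List.take_take]
        congr 1
        omega
      set u : FreeGroup ↥S := FreeGroup.mk sl with hu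
      have hmk : FreeGroup.mk (ℓ.take i) * u = FreeGroup.mk (ℓ.take j) := by
        rw [hu, FreeGroup.mul_mk]
        congr 1
        rw [htk, hsl, List.take_append_drop]
      have hφu : φ u = 1 := by
        have h1 := congrArg φ hmk
        rw [map_mul] at h1
        have hpi : φ (FreeGroup.mk (ℓ.take i)) = p i := (hφmk _).trans (hpdef i).symm
        have hpj : φ (FreeGroup.mk (ℓ.take j)) = p j := (hφmk _).trans (hpdef j).symm
        rw [hpi, hpj] at h1
        rw [hpeq] at h1
        have h2 : p j * φ u = p j * 1 := by rw [mul_one]; exact h1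
        exact mul_left_cancel h2
      have hslchain : List.Chain' (fun x y : ↥S × Bool => ¬(x.1 = y.1 ∧ x.2 = !y.2)) sl := by
        refine hchainR.infix ?_
        refine ⟨ℓ.take i, ℓ.drop j, ?_⟩
        rw [htk, hsl, List.take_append_drop, List.take_append_drop]
      have hutoWord : u.toWord = sl := by
        rw [hu, FreeGroup.toWord_mk, reduce_eq_self_of_chain sl hslchain]
      have hune : u ≠ 1 := by
        intro h
        rw [h, FreeGroup.toWord_one] at hutoWord
        have := hsl_len
        rw [← hutoWord] at this
        simp at this
        omega
      have := hmin u hφu hune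
      rw [hutoWord, hsl_len] at this
      omega
    -- choose a subgroup in the chain avoiding all differences
    set F : Finset G :=
      ((Finset.range L ×ˢ Finset.range L).filter (fun ij => ij.1 ≠ ij.2)).image
        (fun ij => p ij.1 * (p ij.2)⁻¹) with hF
    have hF1 : ∀ x ∈ F, x ≠ 1 := by
      intro x hx h1
      obtain ⟨ij, hij, rfl⟩ := Finset.mem_image.mp hx
      obtain ⟨hmem, hne⟩ := Finset.mem_filter.mp hij
      obtain ⟨hi, hj⟩ := Finset.mem_product.mp hmem
      rw [Finset.mem_range] at hi hj
      rw [mul_inv_eq_one] at h1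
      rcases Nat.lt_or_ge ij.1 ij.2 with h | h
      · exact hdist ij.1 ij.2 h hj h1
      · have : ij.2 < ij.1 := by omega
        exact hdist ij.2 ij.1 this hi h1.symm
    have hF2 : ∀ x ∈ F, ∃ n, x ∉ Γc n := by
      intro x hx
      by_contra hc
      push_neg at hc
      have : x ∈ ⨅ n, Γc n := Subgroup.mem_iInf.mpr hc
      rw [hint] at this
      exact hF1 x hx (Subgroup.mem_bot.mp this)
    choose nf hnf using hF2
    set m : ℕ := F.attach.sup (fun x => nf x.1 x.2) with hm
    have hanti : Antitone Γc := antitone_nat_of_succ_le hchain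
    have havoid : ∀ x ∈ F, x ∉ Γc m := by
      intro x hx hmem
      have h1 : nf x hx ≤ m := by
        rw [hm]
        exact Finset.le_sup (f := fun y : {y // y ∈ F} => nf y.1 y.2)
          (Finset.mem_attach F ⟨x, hx⟩)
      exact hnf x hx (hanti h1 hmem)
    set H : Subgroup G := Γc m with hH
    haveI : H.FiniteIndex := hfi m
    have hcos : ∀ i j, i < L → j < L → pr H (p i) = pr H (p j) → i = j := by
      intro i j hi hj hpr
      by_contra hne
      rw [pr_eq_iff] at hpr
      refine havoid (p j * (p i)⁻¹) ?_ hpr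
      refine Finset.mem_image.mpr ⟨(j, i), ?_, rfl⟩
      refine Finset.mem_filter.mpr ⟨Finset.mem_product.mpr ⟨?_, ?_⟩, ?_⟩
      · exact Finset.mem_range.mpr hj
      · exact Finset.mem_range.mpr hi
      · exact fun h => hne (h : j = i).symm
    have hbound := core H S hScl L hL1 a b hred p hp0 hpL hstep hcos
    rw [hScard] at hbound
    -- contradiction with the rank equation
    have hm' := heq m
    have hidx0 : ((Γc m).index : ℝ) ≠ 0 := by
      exact_mod_cast (hfi m).index_ne_zero
    rw [div_eq_iff hidx0] at hm'
    have hcast : (d ↥H : ℝ) + (H.index : ℝ) ≤ (H.index : ℝ) * (d G : ℝ) := by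
      exact_mod_cast hbound
    have hHm : ((H.index : ℝ)) = ((Γc m).index : ℝ) := rfl
    have hdm : ((d ↥H : ℝ)) = ((d ↥(Γc m) : ℝ)) := rfl
    rw [hHm, hdm] at hcast
    nlinarith [hcast, hm']

/-- Let `Γ` be a finitely generated residually finite group and `(Γₙ)` a chain of
finite index subgroups with trivial intersection. If the sequence
`rₙ = (d(Γₙ)-1)/[Γ:Γₙ]` is eventually constant then `Γ` is virtually free; and if
`rₙ = d(Γ) - 1` for all `n` then `Γ` is free. -/
theorem virtually_free_of_stable_rank {Γ : Type*} [Group Γ] [Group.FG Γ]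
    (hres : ∀ g : Γ, g ≠ 1 → ∃ H : Subgroup Γ, H.Normal ∧ H.FiniteIndex ∧ g ∉ H)
    (Γc : ℕ → Subgroup Γ) (hchain : ∀ n, Γc (n + 1) ≤ Γc n)
    (hfi : ∀ n, (Γc n).FiniteIndex) (hint : (⨅ n, Γc n) = ⊥) :
    ((∃ k, ∀ i, k ≤ i →
        ((d (Γc i) : ℝ) - 1) / (Γc i).index = ((d (Γc k) : ℝ) - 1) / (Γc k).index) →
      ∃ H : Subgroup Γ, H.FiniteIndex ∧ IsFreeGroup H) ∧
    ((∀ n, ((d (Γc n) : ℝ) - 1) / (Γc n).index = (d Γ : ℝ) - 1) → IsFreeGroup Γ) := by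
  have hanti : Antitone Γc := antitone_nat_of_succ_le hchain
  constructor
  · -- eventually constant case
    rintro ⟨k, hk⟩
    refine ⟨Γc k, hfi k, ?_⟩
    haveI : (Γc k).FiniteIndex := hfi k
    haveI : Group.FG ↥(Γc k) := Subgroup.fg_of_index_ne_zero (Γc k)
    set H : Subgroup Γ := Γc k with hH
    have hle : ∀ i, Γc (k + i) ≤ H := fun i => hanti (Nat.le_add_right k i)
    set Δ : ℕ → Subgroup ↥H := fun i => (Γc (k + i)).subgroupOf H with hΔ
    have hΔdef : ∀ i, Δ i = (Γc (k + i)).subgroupOf H := fun _ => rfl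
    have hchain' : ∀ i, Δ (i + 1) ≤ Δ i := by
      intro i
      rw [hΔdef, hΔdef]
      exact Subgroup.comap_mono (hchain (k + i))
    have hidx : ∀ i, (Δ i).index * H.index = (Γc (k + i)).index := by
      intro i
      exact Subgroup.relIndex_mul_index (hle i)
    have hfi' : ∀ i, (Δ i).FiniteIndex := by
      intro i
      refine ⟨fun h0 => (hfi (k + i)).index_ne_zero ?_⟩
      rw [← hidx i, h0, zero_mul]
    have hint' : (⨅ i, Δ i) = ⊥ := by
      rw [eq_bot_iff]
      intro x hx
      have h1 : ∀ i, (x : Γ) ∈ Γc (k + i) := by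
        intro i
        have := Subgroup.mem_iInf.mp hx i
        rw [hΔdef, Subgroup.mem_subgroupOf] at this
        exact this
      have h2 : ∀ n, (x : Γ) ∈ Γc n := fun n => hanti (Nat.le_add_left n k) (h1 n)
      have h3 : (x : Γ) ∈ ⨅ n, Γc n := Subgroup.mem_iInf.mpr h2
      rw [hint, Subgroup.mem_bot] at h3
      exact Subgroup.mem_bot.mpr (Subtype.ext h3)
    have heq' : ∀ i, ((d (Δ i) : ℝ) - 1) / (Δ i).index = (d ↥H : ℝ) - 1 := by
      intro i
      have e := Subgroup.subgroupOfEquivOfLe (hle i)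
      have hd : d ↥(Δ i) = d ↥(Γc (k + i)) := d_congr e
      have h1 := hk (k + i) (Nat.le_add_right k i)
      have hn0 : ((Γc k).index : ℝ) ≠ 0 := by exact_mod_cast (hfi k).index_ne_zero
      have hr0 : ((Δ i).index : ℝ) ≠ 0 := by exact_mod_cast (hfi' i).index_ne_zero
      have hki0 : ((Γc (k + i)).index : ℝ) ≠ 0 := by exact_mod_cast (hfi (k + i)).index_ne_zero
      have hcastidx : ((Δ i).index : ℝ) * ((Γc k).index : ℝ) = ((Γc (k + i)).index : ℝ) := by
        exact_mod_cast hidx i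
      rw [div_eq_div_iff hki0 hn0] at h1
      rw [hd, div_eq_iff hr0]
      have h2 : ((d ↥(Γc (k + i)) : ℝ) - 1) * ((Γc k).index : ℝ) =
          (((d ↥(Γc k) : ℝ) - 1) * ((Δ i).index : ℝ)) * ((Γc k).index : ℝ) := by
        rw [← hcastidx] at h1
        linarith [h1]
      have h3 := mul_right_cancel₀ hn0 h2
      rw [h3]
    exact free_of_chain Δ hchain' hfi' hint' heq'
  · intro h
    exact free_of_chain Γc hchain hfi hint h
end

section
/- Let Γ be a group generated by a finite set S, amenable with a Følner sequence, and let (Γₙ) be a normal chain in Γ with trivial intersection. For each ε > 0 there exist k ∈ ℕ and a transversal T of Γₖ in Γ such that |TS \ T| < ε|T|. -/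
/-!
Take a right Følner set `F` (the inverse of a left one) and `k` so large that `F` embeds in
`K = Γ ⧸ Γₖ`. Fix lifts `ℓ : K → Γ` and order `K` at random. Each `q ∈ K` is covered by `|F|`
tiles `c • π F`; send `q` to its lift in the tile `ℓ c • F` of highest priority. This is a section
`σ` of `Γ → K`, so its image `T` is a transversal, and `σ q * s = σ (q * π s)` unless the top tile
of `q` is one where `f * s` leaves `F`, or the top tile over `q` and `q * π s` does not cover both.
The maximum of a random ordering is uniformly distributed on any set, so the two events together
have probability at most `3 |{f ∈ F | f * s ∉ F}| / |F|`; averaging over orderings gives a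
transversal with `|TS \ T| ≤ 3 |T| ∑ₛ |{f ∈ F | f * s ∉ F}| / |F|`, small by the Følner property.
-/

open Finset Function Pointwise
open scoped symmDiff

section Priority

variable {α β : Type*} [DecidableEq α] [LinearOrder β]

lemma forall_swap_trans_le_of_forall_le {p : α ≃ β} {U : Finset α} {u u' : α} (hu : u ∈ U)
    (hu' : u' ∈ U) (h : ∀ v ∈ U, p v ≤ p u) :
    ∀ v ∈ U, (Equiv.swap u u').trans p v ≤ (Equiv.swap u u').trans p u' := by
  intro v hv
  rw [Equiv.trans_apply, Equiv.trans_apply, Equiv.swap_apply_right]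
  refine h _ ?_
  rw [Equiv.swap_apply_def]
  split_ifs <;> assumption

variable [Fintype α] [Fintype β]

lemma card_forall_le_eq {U : Finset α} {u u' : α} (hu : u ∈ U) (hu' : u' ∈ U) :
    #{p : α ≃ β | ∀ v ∈ U, p v ≤ p u} = #{p : α ≃ β | ∀ v ∈ U, p v ≤ p u'} := by
  have hinv : ∀ p : α ≃ β, (Equiv.swap u u').trans ((Equiv.swap u u').trans p) = p := fun p =>
    Equiv.ext fun x => by simp
  refine card_nbij' (fun p => (Equiv.swap u u').trans p) (fun p => (Equiv.swap u u').trans p)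
    ?_ ?_ (fun p _ => hinv p) (fun p _ => hinv p)
  · intro p hp
    simp only [coe_filter, mem_univ, true_and, Set.mem_ofPred_eq] at hp ⊢
    exact forall_swap_trans_le_of_forall_le hu hu' hp
  · intro p hp
    simp only [coe_filter, mem_univ, true_and, Set.mem_ofPred_eq] at hp ⊢
    rw [Equiv.swap_comm]
    exact forall_swap_trans_le_of_forall_le hu' hu hp

lemma card_forall_le_mul_card_le {U : Finset α} {u : α} (hu : u ∈ U) :
    #{p : α ≃ β | ∀ v ∈ U, p v ≤ p u} * #U ≤ Fintype.card (α ≃ β) := by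
  have hunique : ∀ p : α ≃ β, #{v ∈ U | ∀ w ∈ U, p w ≤ p v} ≤ 1 := fun p =>
    card_le_one.2 fun v hv v' hv' => by
      simp only [mem_filter] at hv hv'
      exact p.injective (le_antisymm (hv'.2 v hv.1) (hv.2 v' hv'.1))
  calc #{p : α ≃ β | ∀ v ∈ U, p v ≤ p u} * #U
      = ∑ v ∈ U, #{p : α ≃ β | ∀ w ∈ U, p w ≤ p v} := by
        rw [mul_comm, ← smul_eq_mul, ← sum_const]
        exact sum_congr rfl fun v hv => card_forall_le_eq hu hv
    _ = ∑ p : α ≃ β, #{v ∈ U | ∀ w ∈ U, p w ≤ p v} :=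
        sum_card_bipartiteAbove_eq_sum_card_bipartiteBelow
          (r := fun v (p : α ≃ β) => ∀ w ∈ U, p w ≤ p v)
    _ ≤ ∑ _p : α ≃ β, 1 := sum_le_sum fun p _ => hunique p
    _ = Fintype.card (α ≃ β) := by simp

lemma card_exists_max_mem_mul_card_le (U V : Finset α) :
    #{p : α ≃ β | ∃ u ∈ U, (∀ v ∈ U, p v ≤ p u) ∧ u ∈ V} * #U ≤ #V * Fintype.card (α ≃ β) := by
  have hsub : ({p : α ≃ β | ∃ u ∈ U, (∀ v ∈ U, p v ≤ p u) ∧ u ∈ V} : Finset (α ≃ β))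
      ⊆ (V ∩ U).biUnion fun u => {p : α ≃ β | ∀ v ∈ U, p v ≤ p u} := by
    intro p hp
    simp only [mem_filter, mem_univ, true_and] at hp
    obtain ⟨u, hu, hmax, huV⟩ := hp
    exact mem_biUnion.2 ⟨u, mem_inter.2 ⟨huV, hu⟩, mem_filter.2 ⟨mem_univ _, hmax⟩⟩
  calc #{p : α ≃ β | ∃ u ∈ U, (∀ v ∈ U, p v ≤ p u) ∧ u ∈ V} * #U
      ≤ (∑ u ∈ V ∩ U, #{p : α ≃ β | ∀ v ∈ U, p v ≤ p u}) * #U :=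
        Nat.mul_le_mul_right _ ((card_le_card hsub).trans card_biUnion_le)
    _ ≤ ∑ _u ∈ V ∩ U, Fintype.card (α ≃ β) := by
        rw [sum_mul]
        exact sum_le_sum fun u hu => card_forall_le_mul_card_le (mem_inter.1 hu).2
    _ ≤ #V * Fintype.card (α ≃ β) := by
        rw [sum_const, smul_eq_mul]
        exact Nat.mul_le_mul_right _ (card_le_card inter_subset_left)

end Priority

section Tiling

variable {Γ K : Type*} [Group Γ] [Group K] [Fintype K] [DecidableEq K]
  (π : Γ →* K) (F : Finset Γ)

def coveringCenters (q : K) : Finset K := {c | c⁻¹ * q ∈ F.image π}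

noncomputable def tileLift (ℓ : K → Γ) (c q : K) : Γ := ℓ c * invFunOn π F (c⁻¹ * q)

variable {π F}

lemma mem_coveringCenters {c q : K} : c ∈ coveringCenters π F q ↔ ∃ f ∈ F, π f = c⁻¹ * q := by
  simp [coveringCenters]

lemma card_coveringCenters (hinj : Set.InjOn π F) (q : K) : #(coveringCenters π F q) = #F := by
  rw [← card_image_of_injOn hinj]
  refine card_nbij' (fun c => c⁻¹ * q) (fun x => q * x⁻¹) ?_ ?_ ?_ ?_ <;> intro x hx <;>
    simp_all [coveringCenters]

lemma map_tileLift {ℓ : K → Γ} (hℓ : ∀ c, π (ℓ c) = c) {c q : K}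
    (hc : c ∈ coveringCenters π F q) : π (tileLift π F ℓ c q) = q := by
  rw [tileLift, map_mul, hℓ, invFunOn_eq (mem_coveringCenters.1 hc), mul_inv_cancel_left]

lemma tileLift_mul (hinj : Set.InjOn π F) (ℓ : K → Γ) {c q : K}
    (hc : c ∈ coveringCenters π F q) {s : Γ} (hs : invFunOn π F (c⁻¹ * q) * s ∈ F) :
    tileLift π F ℓ c q * s = tileLift π F ℓ c (q * π s) := by
  have hf : π (invFunOn π F (c⁻¹ * q) * s) = c⁻¹ * (q * π s) := by
    rw [map_mul, invFunOn_eq (mem_coveringCenters.1 hc), mul_assoc]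
  rw [tileLift, tileLift, mul_assoc, ← hf, hinj.leftInvOn_invFunOn hs]

variable [DecidableEq Γ]

lemma card_filter_invFunOn_mul_notMem (hinj : Set.InjOn π F) (q : K) (s : Γ) :
    #{c ∈ coveringCenters π F q | invFunOn π F (c⁻¹ * q) * s ∉ F} = #{f ∈ F | f * s ∉ F} := by
  refine card_nbij' (fun c => invFunOn π F (c⁻¹ * q)) (fun f => q * (π f)⁻¹) ?_ ?_ ?_ ?_
  · intro c hc
    simp only [coe_filter, Set.mem_ofPred_eq] at hc ⊢
    exact ⟨invFunOn_mem (mem_coveringCenters.1 hc.1), hc.2⟩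
  · intro f hf
    simp only [coe_filter, Set.mem_ofPred_eq] at hf ⊢
    have hq : (q * (π f)⁻¹)⁻¹ * q = π f := by group
    rw [hq, hinj.leftInvOn_invFunOn hf.1]
    exact ⟨mem_coveringCenters.2 ⟨f, hf.1, hq.symm⟩, hf.2⟩
  · intro c hc
    simp only [coe_filter, Set.mem_ofPred_eq] at hc
    simp [invFunOn_eq (mem_coveringCenters.1 hc.1)]
  · intro f hf
    simp only [coe_filter, Set.mem_ofPred_eq] at hf
    simp [hinj.leftInvOn_invFunOn hf.1]

lemma coveringCenters_sdiff_subset (q : K) (s : Γ) :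
    coveringCenters π F q \ coveringCenters π F (q * π s)
      ⊆ {c ∈ coveringCenters π F q | invFunOn π F (c⁻¹ * q) * s ∉ F} := by
  intro c hc
  rw [mem_sdiff] at hc
  refine mem_filter.2 ⟨hc.1, fun hs => hc.2 (mem_coveringCenters.2 ⟨_, hs, ?_⟩)⟩
  rw [map_mul, invFunOn_eq (mem_coveringCenters.1 hc.1), mul_assoc]

lemma card_symmDiff_coveringCenters_le (hinj : Set.InjOn π F) (q : K) (s : Γ) :
    #(coveringCenters π F q ∆ coveringCenters π F (q * π s)) ≤ 2 * #{f ∈ F | f * s ∉ F} := by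
  set C := coveringCenters π F q
  set C' := coveringCenters π F (q * π s)
  have hCC' : #(C \ C') ≤ #{f ∈ F | f * s ∉ F} :=
    card_filter_invFunOn_mul_notMem hinj q s ▸ card_le_card (coveringCenters_sdiff_subset q s)
  have hC'C : #(C' \ C) = #(C \ C') := by
    rw [card_sdiff, card_sdiff, card_coveringCenters hinj, card_coveringCenters hinj, inter_comm]
  have := card_union_le (C \ C') (C' \ C)
  rw [symmDiff_def, sup_eq_union]
  omega

lemma exists_max_mem_of_tileLift_mul_ne {β : Type*} [LinearOrder β] (hinj : Set.InjOn π F)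
    (ℓ : K → Γ) {p : K ≃ β} {c c' q : K} {s : Γ}
    (hc : c ∈ coveringCenters π F q ∧ ∀ v ∈ coveringCenters π F q, p v ≤ p c)
    (hc' : c' ∈ coveringCenters π F (q * π s) ∧
      ∀ v ∈ coveringCenters π F (q * π s), p v ≤ p c')
    (hne : tileLift π F ℓ c q * s ≠ tileLift π F ℓ c' (q * π s)) :
    (∃ u ∈ coveringCenters π F q, (∀ v ∈ coveringCenters π F q, p v ≤ p u) ∧
        invFunOn π F (u⁻¹ * q) * s ∉ F) ∨
      ∃ u ∈ coveringCenters π F q ∪ coveringCenters π F (q * π s),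
        (∀ v ∈ coveringCenters π F q ∪ coveringCenters π F (q * π s), p v ≤ p u) ∧
        u ∈ coveringCenters π F q ∆ coveringCenters π F (q * π s) := by
  set C := coveringCenters π F q
  set C' := coveringCenters π F (q * π s)
  by_contra! h
  obtain ⟨u, huU, humax⟩ := exists_max_image (C ∪ C') p ⟨c, mem_union_left _ hc.1⟩
  have hu : u ∈ C ∧ u ∈ C' := by
    have := h.2 u huU humax
    simp only [mem_union, mem_symmDiff] at huU this
    tauto
  have htop : ∀ {d r}, d ∈ coveringCenters π F r ∧ (∀ v ∈ coveringCenters π F r, p v ≤ p d) →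
      u ∈ coveringCenters π F r → coveringCenters π F r ⊆ C ∪ C' → d = u :=
    fun hd hur hsub => p.injective (le_antisymm (humax _ (hsub hd.1)) (hd.2 u hur))
  rw [htop hc hu.1 subset_union_left, htop hc' hu.2 subset_union_right] at hne
  exact hne (tileLift_mul hinj ℓ hu.1 (h.1 u hu.1 fun v hv => humax v (mem_union_left _ hv)))

lemma card_ne_tileLift_mul_card_le {β : Type*} [Fintype β] [LinearOrder β]
    (hinj : Set.InjOn π F) (ℓ : K → Γ) (ctr : (K ≃ β) → K → K)
    (hctr : ∀ p q, ctr p q ∈ coveringCenters π F q ∧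
      ∀ c ∈ coveringCenters π F q, p c ≤ p (ctr p q)) (q : K) (s : Γ) :
    #{p : K ≃ β | tileLift π F ℓ (ctr p q) q * s ≠ tileLift π F ℓ (ctr p (q * π s)) (q * π s)}
        * #F ≤ 3 * #{f ∈ F | f * s ∉ F} * Fintype.card (K ≃ β) := by
  set C := coveringCenters π F q
  set C' := coveringCenters π F (q * π s)
  set B := {c ∈ C | invFunOn π F (c⁻¹ * q) * s ∉ F}
  set U := C ∪ C'
  have hbad : ({p : K ≃ β | tileLift π F ℓ (ctr p q) q * s ≠
        tileLift π F ℓ (ctr p (q * π s)) (q * π s)} : Finset (K ≃ β))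
      ⊆ ({p : K ≃ β | ∃ u ∈ C, (∀ v ∈ C, p v ≤ p u) ∧ u ∈ B} : Finset (K ≃ β)) ∪
        ({p : K ≃ β | ∃ u ∈ U, (∀ v ∈ U, p v ≤ p u) ∧ u ∈ C ∆ C'} : Finset (K ≃ β)) := by
    intro p hp
    simp only [mem_union, mem_filter, mem_univ, true_and, B] at hp ⊢
    rcases exists_max_mem_of_tileLift_mul_ne hinj ℓ (hctr p q) (hctr p _) hp with
      ⟨u, hu, humax, hus⟩ | h
    · exact Or.inl ⟨u, hu, humax, hu, hus⟩
    · exact Or.inr h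
  have hV := card_symmDiff_coveringCenters_le hinj q s
  have hFU : #F ≤ #U := card_coveringCenters hinj q ▸ card_le_card subset_union_left
  have hB : #B = #{f ∈ F | f * s ∉ F} := card_filter_invFunOn_mul_notMem hinj q s
  calc _ ≤ (#{p : K ≃ β | ∃ u ∈ C, (∀ v ∈ C, p v ≤ p u) ∧ u ∈ B} +
          #{p : K ≃ β | ∃ u ∈ U, (∀ v ∈ U, p v ≤ p u) ∧ u ∈ C ∆ C'}) * #F :=
        Nat.mul_le_mul_right _ ((card_le_card hbad).trans (card_union_le _ _))
    _ ≤ #{p : K ≃ β | ∃ u ∈ C, (∀ v ∈ C, p v ≤ p u) ∧ u ∈ B} * #C +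
          #{p : K ≃ β | ∃ u ∈ U, (∀ v ∈ U, p v ≤ p u) ∧ u ∈ C ∆ C'} * #U := by
        rw [add_mul, card_coveringCenters hinj]
        exact Nat.add_le_add_left (Nat.mul_le_mul_left _ hFU) _
    _ ≤ #B * Fintype.card (K ≃ β) + #(C ∆ C') * Fintype.card (K ≃ β) :=
        Nat.add_le_add (card_exists_max_mem_mul_card_le C B) (card_exists_max_mem_mul_card_le U _)
    _ ≤ 3 * #{f ∈ F | f * s ∉ F} * Fintype.card (K ≃ β) := by
        rw [hB]
        linarith [Nat.mul_le_mul_right (Fintype.card (K ≃ β)) hV]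

theorem exists_section_card_ne_le (hsurj : Surjective π) (hF : F.Nonempty)
    (hinj : Set.InjOn π F) {S : Finset Γ} {δ : ℝ}
    (hδ : ((∑ s ∈ S, #{f ∈ F | f * s ∉ F} : ℕ) : ℝ) ≤ δ * #S * #F) :
    ∃ σ : K → Γ, (∀ q, π (σ q) = q) ∧
      (#{x ∈ univ ×ˢ S | σ x.1 * x.2 ≠ σ (x.1 * π x.2)} : ℝ) ≤ 3 * δ * #S * Fintype.card K := by
  have hC : ∀ q, (coveringCenters π F q).Nonempty := fun q =>
    let ⟨f, hf⟩ := hF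
    ⟨q * (π f)⁻¹, mem_coveringCenters.2 ⟨f, hf, by group⟩⟩
  choose ctr hctr using fun (p : K ≃ Fin (Fintype.card K)) q =>
    exists_max_image (coveringCenters π F q) p (hC q)
  set σ := fun p q => tileLift π F (surjInv hsurj) (ctr p q) q
  have hsum : ∑ p, #{x ∈ univ ×ˢ S | σ p x.1 * x.2 ≠ σ p (x.1 * π x.2)} * #F
      ≤ ∑ _p : K ≃ Fin (Fintype.card K), 3 * Fintype.card K * ∑ s ∈ S, #{f ∈ F | f * s ∉ F} := by
    calc _ = ∑ x ∈ univ ×ˢ S, #{p | σ p x.1 * x.2 ≠ σ p (x.1 * π x.2)} * #F := by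
          rw [← sum_mul, ← sum_mul]
          exact congrArg (· * #F) (sum_card_bipartiteAbove_eq_sum_card_bipartiteBelow
            (r := fun p (x : K × Γ) => σ p x.1 * x.2 ≠ σ p (x.1 * π x.2)))
      _ ≤ ∑ x ∈ univ ×ˢ S,
            3 * #{f ∈ F | f * x.2 ∉ F} * Fintype.card (K ≃ Fin (Fintype.card K)) :=
          sum_le_sum fun x _ => card_ne_tileLift_mul_card_le hinj _ ctr hctr x.1 x.2
      _ = _ := by
          simp only [sum_product, sum_const, card_univ, smul_eq_mul, ← sum_mul, ← mul_sum]
          ring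
  have : Nonempty (K ≃ Fin (Fintype.card K)) := ⟨Fintype.equivFin K⟩
  obtain ⟨p, -, hp⟩ := exists_le_of_sum_le univ_nonempty hsum
  refine ⟨σ p, fun q => map_tileLift (surjInv_eq hsurj) (hctr p q).1,
    le_of_mul_le_mul_right ?_ (by exact_mod_cast hF.card_pos : (0 : ℝ) < #F)⟩
  calc _ ≤ 3 * Fintype.card K * ((∑ s ∈ S, #{f ∈ F | f * s ∉ F} : ℕ) : ℝ) := by
        exact_mod_cast hp
    _ ≤ 3 * Fintype.card K * (δ * #S * #F) := by gcongr
    _ = _ := by ring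

end Tiling

section Transversal

variable {Γ : Type*} [Group Γ] [DecidableEq Γ]

lemma existsUnique_mem_image_inv_mul_mem {H : Subgroup Γ} [Fintype (Γ ⧸ H)] {σ : Γ ⧸ H → Γ}
    (hσ : ∀ q, (σ q : Γ ⧸ H) = q) (g : Γ) :
    ∃! t, t ∈ univ.image σ ∧ t⁻¹ * g ∈ H := by
  refine ⟨σ g, ⟨mem_image_of_mem σ (mem_univ _), QuotientGroup.eq.1 (hσ g)⟩, ?_⟩
  rintro _ ⟨ht, htg⟩
  obtain ⟨q, -, rfl⟩ := mem_image.1 ht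
  rw [← QuotientGroup.eq.2 htg, hσ]

lemma card_image_mul_sdiff_le {K : Type*} [Mul K] [Fintype K] (π : Γ → K) (σ : K → Γ)
    (S : Finset Γ) :
    #((univ.image σ * S) \ univ.image σ) ≤ #{x ∈ univ ×ˢ S | σ x.1 * x.2 ≠ σ (x.1 * π x.2)} := by
  refine le_trans (card_le_card fun y hy => ?_) (card_image_le (f := fun x => σ x.1 * x.2))
  obtain ⟨hyTS, hyT⟩ := mem_sdiff.1 hy
  obtain ⟨_, ht, s, hs, rfl⟩ := mem_mul.1 hyTS
  obtain ⟨q, -, rfl⟩ := mem_image.1 ht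
  refine mem_image.2 ⟨(q, s), mem_filter.2 ⟨mem_product.2 ⟨mem_univ _, hs⟩, fun h => hyT ?_⟩, rfl⟩
  exact h ▸ mem_image_of_mem σ (mem_univ _)

end Transversal

section Folner

variable {G : Type*} [Group G] [DecidableEq G]

lemma card_filter_inv_mul_notMem (A : Finset G) (g : G) :
    #{a ∈ A | g⁻¹ * a ∉ A} = #{a ∈ A | g * a ∉ A} := by
  have h : #{a ∈ A | g⁻¹ * a ∈ A} = #{a ∈ A | g * a ∈ A} :=
    card_nbij' (g⁻¹ * ·) (g * ·) (fun a ha => by simp_all) (fun a ha => by simp_all)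
      (fun a _ => by simp) (fun a _ => by simp)
  have h₁ := card_filter_add_card_filter_not (s := A) (fun a => g⁻¹ * a ∈ A)
  have h₂ := card_filter_add_card_filter_not (s := A) (fun a => g * a ∈ A)
  omega

lemma card_filter_mul_notMem_inv (A : Finset G) (g : G) :
    #{f ∈ A⁻¹ | f * g ∉ A⁻¹} = #{a ∈ A | g * a ∉ A} := by
  rw [← card_filter_inv_mul_notMem, ← card_inv]
  congr 1
  ext f
  simp [mem_inv']

lemma exists_nonempty_sum_card_mul_notMem_le (S : Finset G)
    (hamen : ∀ δ : ℝ, 0 < δ → ∃ A : Finset G, A.Nonempty ∧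
      ((((S ×ˢ A).filter fun p => p.1 * p.2 ∉ A).card : ℝ) ≤ δ * S.card * A.card))
    {δ : ℝ} (hδ : 0 < δ) :
    ∃ F : Finset G, F.Nonempty ∧ ((∑ s ∈ S, #{f ∈ F | f * s ∉ F} : ℕ) : ℝ) ≤ δ * #S * #F := by
  obtain ⟨A, hA, hAδ⟩ := hamen δ hδ
  refine ⟨A⁻¹, hA.inv, ?_⟩
  simp only [card_filter_mul_notMem_inv, card_inv]
  simpa only [card_filter, sum_product] using hAδ

end Folner

lemma exists_injOn_mk_of_iInf_eq_bot {Γ : Type*} [Group Γ] {N : ℕ → Subgroup Γ}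
    (hN : Antitone N) (hbot : ⨅ n, N n = ⊥) (F : Finset Γ) :
    ∃ k, Set.InjOn (QuotientGroup.mk : Γ → Γ ⧸ N k) F := by
  have : ∀ᶠ k in Filter.atTop, ∀ a ∈ F, ∀ b ∈ F, a⁻¹ * b ∈ N k → a = b := by
    simp only [Filter.eventually_all_finset]
    intro a _ b _
    by_cases hab : a = b
    · exact Filter.Eventually.of_forall fun _ _ => hab
    obtain ⟨n, hn⟩ : ∃ n, a⁻¹ * b ∉ N n := by
      by_contra! h
      have : a⁻¹ * b ∈ ⨅ n, N n := Subgroup.mem_iInf.2 h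
      rw [hbot, Subgroup.mem_bot, inv_mul_eq_one] at this
      exact hab this
    exact Filter.eventually_atTop.2 ⟨n, fun m hm h => absurd (hN hm h) hn⟩
  obtain ⟨k, hk⟩ := this.exists
  exact ⟨k, fun a ha b hb hab => hk a ha b hb (QuotientGroup.eq.1 hab)⟩

theorem weiss_transversal_general {Γ : Type*} [Group Γ] [DecidableEq Γ]
    (S : Finset Γ)
    (hamen : ∀ δ : ℝ, 0 < δ → ∃ A : Finset Γ, A.Nonempty ∧
      ((((S ×ˢ A).filter fun p => p.1 * p.2 ∉ A).card : ℝ) ≤ δ * S.card * A.card))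
    (Γc : ℕ → Subgroup Γ) (hnorm : ∀ n, (Γc n).Normal)
    (hchain : ∀ n, Γc (n + 1) ≤ Γc n) (hfi : ∀ n, (Γc n).FiniteIndex)
    (hint : (⨅ n, Γc n) = ⊥) :
    ∀ ε : ℝ, 0 < ε → ∃ (k : ℕ) (T : Finset Γ),
      (∀ g : Γ, ∃! t, t ∈ T ∧ t⁻¹ * g ∈ Γc k) ∧
      (((T * S) \ T).card : ℝ) < ε * T.card := by
  intro ε hε
  classical
  set δ := ε / (3 * (#S + 1))
  have hδS : 3 * δ * #S < ε := by
    rw [show 3 * δ * #S = ε * (#S / (#S + 1)) by simp only [δ]; field_simp]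
    exact mul_lt_of_lt_one_right hε ((div_lt_one (by positivity)).2 (lt_add_one _))
  obtain ⟨F, hF, hFδ⟩ := exists_nonempty_sum_card_mul_notMem_le S hamen (δ := δ) (by positivity)
  obtain ⟨k, hk⟩ := exists_injOn_mk_of_iInf_eq_bot (antitone_nat_of_succ_le hchain) hint F
  have := hnorm k
  have := hfi k
  let := Fintype.ofFinite (Γ ⧸ Γc k)
  obtain ⟨σ, hσ, hbad⟩ := exists_section_card_ne_le (QuotientGroup.mk'_surjective (Γc k)) hF hk hFδ
  refine ⟨k, univ.image σ, existsUnique_mem_image_inv_mul_mem hσ, ?_⟩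
  rw [card_image_of_injective _ (LeftInverse.injective hσ), card_univ]
  calc _ ≤ (#{x ∈ univ ×ˢ S | σ x.1 * x.2 ≠ σ (x.1 * QuotientGroup.mk' (Γc k) x.2)} : ℝ) := by
        exact_mod_cast card_image_mul_sdiff_le (QuotientGroup.mk' (Γc k)) σ S
    _ ≤ 3 * δ * #S * Fintype.card (Γ ⧸ Γc k) := hbad
    _ < ε * Fintype.card (Γ ⧸ Γc k) :=
        mul_lt_mul_of_pos_right hδS (by exact_mod_cast Fintype.card_pos)

/-- **B. Weiss's theorem.** Let `Γ` be an amenable group generated by a finite set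
`S` and `(Γₙ)` a normal chain with trivial intersection. For every `ε > 0` there is
`k` and a transversal `T` of `Γₖ` in `Γ` with `|TS \ T| < ε|T|`. -/
theorem weiss_transversal {Γ : Type*} [Group Γ] [DecidableEq Γ]
    (S : Finset Γ) (hS : Subgroup.closure (S : Set Γ) = ⊤)
    (hamen : ∀ δ : ℝ, 0 < δ → ∃ A : Finset Γ, A.Nonempty ∧
      ((((S ×ˢ A).filter fun p => p.1 * p.2 ∉ A).card : ℝ) ≤ δ * S.card * A.card))
    (Γc : ℕ → Subgroup Γ) (hnorm : ∀ n, (Γc n).Normal)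
    (hchain : ∀ n, Γc (n + 1) ≤ Γc n) (hfi : ∀ n, (Γc n).FiniteIndex)
    (hint : (⨅ n, Γc n) = ⊥) :
    ∀ ε : ℝ, 0 < ε → ∃ (k : ℕ) (T : Finset Γ),
      (∀ g : Γ, ∃! t, t ∈ T ∧ t⁻¹ * g ∈ Γc k) ∧
      (((T * S) \ T).card : ℝ) < ε * T.card :=
  weiss_transversal_general S hamen Γc hnorm hchain hfi hint
end

section
/- Let Γ be a group generated by a finite set S, H ◁ Γ a normal subgroup of finite index, and T a transversal of H in Γ with |∂_S(T)| ≤ ε|S||T| (where ∂_S(T) = {(t, st) : t ∈ T, s ∈ S, st ∉ T}). Then H is generated by the set {(s̃t)⁻¹st : (t, st) ∈ ∂_S(T)} of at most ε|S|[Γ:H] elements, where g̃ denotes the unique element of T with gH = g̃H. Hence d(H) ≤ ε|S|·[Γ : H]. -/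
/-- Let `Γ` be generated by a finite set `S`, `H ◁ Γ` of finite index, and `T` a
transversal of `H` with `|∂_S(T)| ≤ ε|S||T|`. Then `H` is generated by the Schreier
elements `(s̃t)⁻¹st` for `(t, st) ∈ ∂_S(T)`, and `d(H) ≤ ε|S|[Γ:H]`. -/
theorem schreier_boundary_generators {Γ : Type*} [Group Γ] [DecidableEq Γ]
    (S : Finset Γ) (hS : Subgroup.closure (S : Set Γ) = ⊤)
    (H : Subgroup Γ) (hHnorm : H.Normal) (hHfi : H.FiniteIndex)
    (T : Finset Γ) (htrans : ∀ g : Γ, ∃! t, t ∈ T ∧ t⁻¹ * g ∈ H)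
    (rep : Γ → Γ) (hrep : ∀ g : Γ, rep g ∈ T ∧ (rep g)⁻¹ * g ∈ H)
    (ε : ℝ)
    (hbd : (((S ×ˢ T).filter fun p => p.1 * p.2 ∉ T).card : ℝ) ≤ ε * S.card * T.card) :
    Subgroup.closure
        {x : Γ | ∃ s ∈ S, ∃ t ∈ T, s * t ∉ T ∧ x = (rep (s * t))⁻¹ * (s * t)} = H ∧
      (d H : ℝ) ≤ ε * S.card * H.index := by
  classical
  set X : Set Γ := {x : Γ | ∃ s ∈ S, ∃ t ∈ T, s * t ∉ T ∧ x = (rep (s * t))⁻¹ * (s * t)}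
    with hX
  set K := Subgroup.closure X with hK
  have repT : ∀ g, rep g ∈ T := fun g => (hrep g).1
  have repH : ∀ g, (rep g)⁻¹ * g ∈ H := fun g => (hrep g).2
  -- rep is determined by the transversal property
  have rep_eq : ∀ g t, t ∈ T → t⁻¹ * g ∈ H → rep g = t := by
    intro g t ht hH
    obtain ⟨u, _, huniq⟩ := htrans g
    rw [huniq _ ⟨repT g, repH g⟩, huniq _ ⟨ht, hH⟩]
  -- rep is constant on left cosets
  have rep_congr : ∀ a b : Γ, b⁻¹ * a ∈ H → rep a = rep b := by
    intro a b hab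
    refine rep_eq a (rep b) (repT b) ?_
    have : ((rep b)⁻¹ * b) * (b⁻¹ * a) ∈ H := H.mul_mem (repH b) hab
    simpa [mul_assoc] using this
  -- X ⊆ H
  have hXH : X ⊆ (H : Set Γ) := by
    rintro x ⟨s, _, t, _, _, rfl⟩
    exact repH (s * t)
  have KleH : K ≤ H := (Subgroup.closure_le H).mpr hXH
  -- all Schreier generators lie in K
  have gen_mem : ∀ s ∈ S, ∀ t ∈ T, (rep (s * t))⁻¹ * (s * t) ∈ K := by
    intro s hs t ht
    by_cases hst : s * t ∈ T
    · have h1 : (s * t)⁻¹ * (s * t) ∈ H := by rw [inv_mul_cancel]; exact H.one_mem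
      have : rep (s * t) = s * t := rep_eq _ _ hst h1
      rw [this, inv_mul_cancel]
      exact K.one_mem
    · exact Subgroup.subset_closure ⟨s, hs, t, ht, hst, rfl⟩
  have key : ∀ s ∈ S, ∀ g : Γ, (rep (s * g))⁻¹ * (s * rep g) ∈ K := by
    intro s hs g
    have h1 : rep (s * g) = rep (s * rep g) := by
      refine (rep_congr _ _ ?_).symm
      have : (g⁻¹ * s⁻¹) * (s * rep g) = ((rep g)⁻¹ * g)⁻¹ := by group
      rw [mul_inv_rev, this]
      exact H.inv_mem (repH g)
    rw [h1]
    exact gen_mem s hs (rep g) (repT g)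
  have key' : ∀ s ∈ S, ∀ g : Γ, (rep (s⁻¹ * g))⁻¹ * (s⁻¹ * rep g) ∈ K := by
    intro s hs g
    set u := rep (s⁻¹ * g) with hu
    have h1 : rep (s * u) = rep g := by
      refine rep_congr _ _ ?_
      have : g⁻¹ * (s * u) = (u⁻¹ * (s⁻¹ * g))⁻¹ := by group
      rw [this]
      exact H.inv_mem (repH (s⁻¹ * g))
    have h2 : (rep (s * u))⁻¹ * (s * u) ∈ K := gen_mem s hs u (repT _)
    rw [h1] at h2
    have h3 := K.inv_mem h2
    have : ((rep g)⁻¹ * (s * u))⁻¹ = u⁻¹ * (s⁻¹ * rep g) := by group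
    rw [this] at h3
    exact h3
  set t0 := rep 1 with ht0
  have ht0H : t0 ∈ H := by
    have := repH 1
    rw [mul_one] at this
    simpa using H.inv_mem this
  -- main induction: for every g, (rep g)⁻¹ * g * t0 ∈ K
  have htop : Submonoid.closure ((S : Set Γ) ∪ (S : Set Γ)⁻¹) = ⊤ := by
    rw [← Subgroup.closure_toSubmonoid, hS]
    rfl
  have Pall : ∀ g : Γ, (rep g)⁻¹ * g * t0 ∈ K := by
    have main : ∀ g : Γ, ∀ x : Γ, (rep x)⁻¹ * x * t0 ∈ K →
        (rep (g * x))⁻¹ * (g * x) * t0 ∈ K := by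
      intro g
      have hg : g ∈ Submonoid.closure ((S : Set Γ) ∪ (S : Set Γ)⁻¹) := by
        rw [htop]; trivial
      induction hg using Submonoid.closure_induction with
      | mem a ha =>
        intro x hx
        rcases ha with ha | ha
        · have h1 := key a ha x
          have : (rep (a * x))⁻¹ * (a * x) * t0 =
              ((rep (a * x))⁻¹ * (a * rep x)) * ((rep x)⁻¹ * x * t0) := by group
          rw [this]
          exact K.mul_mem h1 hx
        · have ha' : a⁻¹ ∈ S := by simpa using ha
          obtain ⟨s, hs, rfl⟩ : ∃ s ∈ S, a = s⁻¹ := ⟨a⁻¹, ha', (inv_inv a).symm⟩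
          have h1 := key' s hs x
          have : (rep (s⁻¹ * x))⁻¹ * (s⁻¹ * x) * t0 =
              ((rep (s⁻¹ * x))⁻¹ * (s⁻¹ * rep x)) * ((rep x)⁻¹ * x * t0) := by group
          rw [this]
          exact K.mul_mem h1 hx
      | one =>
        intro x hx
        simpa using hx
      | mul a b _ _ iha ihb =>
        intro x hx
        have hab : a * b * x = a * (b * x) := mul_assoc a b x
        rw [hab]
        exact iha _ (ihb _ hx)
    intro g
    have h1 : (rep (1 : Γ))⁻¹ * 1 * t0 ∈ K := by
      rw [mul_one, ← ht0, inv_mul_cancel]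
      exact K.one_mem
    have := main g 1 h1
    simpa using this
  -- H ≤ K
  have HleK : H ≤ K := by
    intro h hh
    have hh' : t0 * h * t0⁻¹ ∈ H := H.mul_mem (H.mul_mem ht0H hh) (H.inv_mem ht0H)
    have hrepeq : rep (t0 * h * t0⁻¹) = t0 := by
      refine rep_eq _ _ (repT 1) ?_
      have : t0⁻¹ * (t0 * h * t0⁻¹) = h * t0⁻¹ := by group
      rw [this]
      exact H.mul_mem hh (H.inv_mem ht0H)
    have := Pall (t0 * h * t0⁻¹)
    rw [hrepeq] at this
    have heq : t0⁻¹ * (t0 * h * t0⁻¹) * t0 = h := by group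
    rwa [heq] at this
  have hmain : K = H := le_antisymm KleH HleK
  refine ⟨hmain, ?_⟩
  -- second part
  set B := (S ×ˢ T).filter (fun p => p.1 * p.2 ∉ T) with hB
  set F : Finset H := B.image
    (fun p => ⟨(rep (p.1 * p.2))⁻¹ * (p.1 * p.2), repH _⟩) with hF
  have himage : H.subtype '' (F : Set H) = X := by
    ext x
    constructor
    · rintro ⟨⟨y, hy⟩, hyF, rfl⟩
      simp only [hF, Finset.coe_image, Set.mem_image, Finset.mem_coe] at hyF
      obtain ⟨p, hp, hpe⟩ := hyF
      rw [hB, Finset.mem_filter, Finset.mem_product] at hp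
      exact ⟨p.1, hp.1.1, p.2, hp.1.2, hp.2, by
        simpa using congrArg Subtype.val hpe.symm⟩
    · rintro ⟨s, hs, t, ht, hst, rfl⟩
      refine ⟨⟨_, repH (s * t)⟩, ?_, rfl⟩
      simp only [hF, Finset.coe_image, Set.mem_image, Finset.mem_coe]
      exact ⟨(s, t), by simp [hB, Finset.mem_filter, Finset.mem_product, hs, ht, hst], rfl⟩
  have hFtop : Subgroup.closure (F : Set H) = ⊤ := by
    apply Subgroup.map_injective H.subtype_injective
    rw [MonoidHom.map_closure, himage, ← MonoidHom.range_eq_map, H.range_subtype]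
    exact hmain
  have hd : d H ≤ F.card := Nat.sInf_le ⟨F, rfl, hFtop⟩
  have hcard : F.card ≤ B.card := Finset.card_image_le
  -- T.card = H.index
  have hindex : (T.card : ℕ) = H.index := by
    have hbij : Function.Bijective (fun t : {x // x ∈ T} => (QuotientGroup.mk t.1 : Γ ⧸ H)) := by
      constructor
      · rintro ⟨a, ha⟩ ⟨b, hb⟩ hab
        have h1 : a⁻¹ * b ∈ H := (QuotientGroup.eq).mp hab
        obtain ⟨u, _, huniq⟩ := htrans b
        have := (huniq a ⟨ha, h1⟩).trans (huniq b ⟨hb, by simp [H.one_mem]⟩).symm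
        exact Subtype.ext this
      · intro q
        induction q using QuotientGroup.induction_on with
        | H g =>
          exact ⟨⟨rep g, repT g⟩, (QuotientGroup.eq).mpr (repH g)⟩
    have := Nat.card_eq_of_bijective _ hbij
    rw [Nat.card_eq_finsetCard] at this
    exact this.trans rfl
  calc (d H : ℝ) ≤ (F.card : ℝ) := by exact_mod_cast hd
    _ ≤ (B.card : ℝ) := by exact_mod_cast hcard
    _ ≤ ε * S.card * T.card := hbd
    _ = ε * S.card * H.index := by rw [hindex]
end
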